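/- Let R ≠ 0 be a Jacobi-Tsankov algebraic curvature tensor on V with r(x) < m-1 for all x ∈ V. Then r(x) = 1 for every unit vector x, and R is Osserman: the nonzero eigenvalue λ(x) of J(x) is the same for all unit vectors x. -/

import Mathlib

open scoped InnerProductSpace
set_option linter.unusedSectionVars false
noncomputable section

variable {V : Type*} [NormedAddCommGroup V] [InnerProductSpace ℝ V]

/-- `R` satisfies the symmetries of an algebraic curvature tensor. -/
def IsCurvatureOperator (R : V →ₗ[ℝ] V →ₗ[ℝ] V →ₗ[ℝ] V) : Prop :=
  (∀ x y z w : V, ⟪R x y z, w⟫_ℝ = ⟪R z w x, y⟫_ℝ) ∧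
  (∀ x y z w : V, ⟪R x y z, w⟫_ℝ = - ⟪R y x z, w⟫_ℝ) ∧
  (∀ x y z w : V, ⟪R x y z, w⟫_ℝ + ⟪R y z x, w⟫_ℝ + ⟪R z x y, w⟫_ℝ = 0)

/-- The Jacobi operator `J(x) : y ↦ R(y,x)x`. -/
def Jacobi (R : V →ₗ[ℝ] V →ₗ[ℝ] V →ₗ[ℝ] V) (x : V) : V →ₗ[ℝ] V where
  toFun y := R y x x
  map_add' a b := by simp
  map_smul' c a := by simp

/-- The polarized Jacobi operator `J(x,y) : z ↦ ½R(z,x)y + ½R(z,y)x`. -/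
def JacobiP (R : V →ₗ[ℝ] V →ₗ[ℝ] V →ₗ[ℝ] V) (x y : V) : V →ₗ[ℝ] V where
  toFun z := (1/2 : ℝ) • R z x y + (1/2 : ℝ) • R z y x
  map_add' a b := by simp; module
  map_smul' c a := by simp; module

/-- `R` is Jacobi-Tsankov: Jacobi operators of orthogonal vectors commute. -/
def JacobiTsankov (R : V →ₗ[ℝ] V →ₗ[ℝ] V →ₗ[ℝ] V) : Prop :=
  ∀ x y : V, ⟪x, y⟫_ℝ = 0 → Jacobi R x ∘ₗ Jacobi R y = Jacobi R y ∘ₗ Jacobi R x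

section Helpers

lemma unit_ne_zero {x : V} (hx : ‖x‖ = 1) : x ≠ 0 := by
  intro h0; rw [h0] at hx; simp at hx

lemma smul_cancel {c : ℝ} (hc : c ≠ 0) {u v : V} (h : c • u = c • v) : u = v :=
  smul_right_injective V hc h

lemma scalar_of_smul_unit {c d : ℝ} {e : V} (he : e ≠ 0) (h : c • e = d • e) : c = d := by
  have : (c - d) • e = 0 := by rw [sub_smul, h, sub_self]
  rcases smul_eq_zero.mp this with h' | h'
  · linarith [h']
  · exact absurd h' he

lemma scalar_zero_of_smul {c : ℝ} {e : V} (he : e ≠ 0) (h : c • e = 0) : c = 0 := by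
  rcases smul_eq_zero.mp h with h' | h'
  · exact h'
  · exact absurd h' he

lemma norm_eq_one_of_inner_self {v : V} (h : ⟪v, v⟫_ℝ = 1) : ‖v‖ = 1 := by
  have h2 : ‖v‖ ^ 2 = 1 := by rw [← real_inner_self_eq_norm_sq]; exact h
  nlinarith [norm_nonneg v]

lemma eq_zero_of_inner_self {v : V} (h : ⟪v, v⟫_ℝ = 0) : v = 0 :=
  inner_self_eq_zero.mp h

end Helpers

section Basics

variable {R : V →ₗ[ℝ] V →ₗ[ℝ] V →ₗ[ℝ] V}

lemma J_apply (R : V →ₗ[ℝ] V →ₗ[ℝ] V →ₗ[ℝ] V) (x y : V) : Jacobi R x y = R y x x := rfl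

lemma JP_apply (R : V →ₗ[ℝ] V →ₗ[ℝ] V →ₗ[ℝ] V) (x y z : V) :
    JacobiP R x y z = (1/2 : ℝ) • R z x y + (1/2 : ℝ) • R z y x := rfl

variable (hR : IsCurvatureOperator R)
include hR

lemma inner_34 (x y z w : V) : ⟪R x y z, w⟫_ℝ = - ⟪R x y w, z⟫_ℝ := by
  rw [hR.1 x y z w, hR.2.1 z w x y, hR.1 w z x y]

lemma R_xx (x z : V) : R x x z = 0 := by
  have h := hR.2.1 x x z (R x x z)
  have : ⟪R x x z, R x x z⟫_ℝ = 0 := by linarith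
  exact eq_zero_of_inner_self this

lemma R_skew (x y z : V) : R x y z = - R y x z := by
  have h : ∀ w, ⟪R x y z + R y x z, w⟫_ℝ = 0 := by
    intro w
    rw [inner_add_left]
    have := hR.2.1 x y z w
    linarith
  have h2 := h (R x y z + R y x z)
  have h3 := eq_zero_of_inner_self h2
  linear_combination (norm := module) h3

lemma J_self (x : V) : Jacobi R x x = 0 := by
  rw [J_apply]; exact R_xx hR x x

lemma J_symm (x u v : V) : ⟪Jacobi R x u, v⟫_ℝ = ⟪u, Jacobi R x v⟫_ℝ := by
  rw [J_apply, J_apply, hR.1 u x x v, hR.2.1 x v u x, inner_34 hR v x u x, neg_neg,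
    real_inner_comm]

lemma sect (x y : V) : ⟪Jacobi R x y, y⟫_ℝ = ⟪Jacobi R y x, x⟫_ℝ := by
  rw [J_apply, J_apply]; exact hR.1 y x x y

omit hR

lemma JP_comm (R : V →ₗ[ℝ] V →ₗ[ℝ] V →ₗ[ℝ] V) (x y : V) : JacobiP R x y = JacobiP R y x := by
  ext z; rw [JP_apply, JP_apply]; module

include hR

lemma JP_left (x y : V) : JacobiP R x y x = (-(1/2) : ℝ) • Jacobi R x y := by
  rw [JP_apply, J_apply, R_xx hR, R_skew hR x y x]
  module

lemma JP_right (x y : V) : JacobiP R x y y = (-(1/2) : ℝ) • Jacobi R y x := by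
  rw [JP_comm]; exact JP_left hR y x

omit hR

lemma J_combo (R : V →ₗ[ℝ] V →ₗ[ℝ] V →ₗ[ℝ] V) (α γ : ℝ) (p q w : V) :
    Jacobi R (α • p + γ • q) w =
      (α * α) • Jacobi R p w + (γ * γ) • Jacobi R q w
        + (2 * (α * γ)) • JacobiP R p q w := by
  rw [J_apply, J_apply, J_apply, JP_apply]
  simp only [map_add, map_smul, LinearMap.add_apply, LinearMap.smul_apply]
  module

lemma J_add_apply (R : V →ₗ[ℝ] V →ₗ[ℝ] V →ₗ[ℝ] V) (x y w : V) :
    Jacobi R (x + y) w = Jacobi R x w + Jacobi R y w + (2 : ℝ) • JacobiP R x y w := by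
  rw [J_apply, J_apply, J_apply, JP_apply]
  simp only [map_add, LinearMap.add_apply]
  module

lemma J_sub_apply (R : V →ₗ[ℝ] V →ₗ[ℝ] V →ₗ[ℝ] V) (x y w : V) :
    Jacobi R (x - y) w = Jacobi R x w + Jacobi R y w - (2 : ℝ) • JacobiP R x y w := by
  rw [J_apply, J_apply, J_apply, JP_apply]
  simp only [map_sub, LinearMap.sub_apply]
  module

lemma JP_smul_left (R : V →ₗ[ℝ] V →ₗ[ℝ] V →ₗ[ℝ] V) (c : ℝ) (p q w : V) :
    JacobiP R (c • p) q w = c • JacobiP R p q w := by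
  rw [JP_apply, JP_apply]
  simp only [map_smul, LinearMap.smul_apply]
  module

lemma JP_add_left (R : V →ₗ[ℝ] V →ₗ[ℝ] V →ₗ[ℝ] V) (p p' q w : V) :
    JacobiP R (p + p') q w = JacobiP R p q w + JacobiP R p' q w := by
  rw [JP_apply, JP_apply, JP_apply]
  simp only [map_add, LinearMap.add_apply]
  module

lemma JP_smul_right (R : V →ₗ[ℝ] V →ₗ[ℝ] V →ₗ[ℝ] V) (c : ℝ) (p q w : V) :
    JacobiP R p (c • q) w = c • JacobiP R p q w := by
  rw [JP_comm, JP_smul_left, JP_comm]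

lemma JP_combo_left (R : V →ₗ[ℝ] V →ₗ[ℝ] V →ₗ[ℝ] V) (α γ : ℝ) (p p' q w : V) :
    JacobiP R (α • p + γ • p') q w = α • JacobiP R p q w + γ • JacobiP R p' q w := by
  rw [JP_add_left, JP_smul_left, JP_smul_left]

lemma J_smul_apply (R : V →ₗ[ℝ] V →ₗ[ℝ] V →ₗ[ℝ] V) (c : ℝ) (x w : V) :
    Jacobi R (c • x) w = (c * c) • Jacobi R x w := by
  rw [J_apply, J_apply]
  simp only [map_smul, LinearMap.smul_apply]
  module

include hR

lemma JP_symm (x y u v : V) :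
    ⟪JacobiP R x y u, v⟫_ℝ = ⟪u, JacobiP R x y v⟫_ℝ := by
  have hw : ∀ w, JacobiP R x y w =
      (1/2 : ℝ) • (Jacobi R (x + y) w - Jacobi R x w - Jacobi R y w) := by
    intro w; rw [J_add_apply]; module
  rw [hw u, hw v]
  simp only [inner_smul_left, inner_smul_right, inner_sub_left, inner_sub_right,
    J_symm hR, starRingEnd_apply, star_trivial]
  try ring

lemma JP_cyclic (a b c : V) :
    JacobiP R a b c + JacobiP R b c a + JacobiP R c a b = 0 := by
  rw [JP_apply, JP_apply, JP_apply, R_skew hR a c b, R_skew hR b c a, R_skew hR b a c]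
  module

end Basics
section Tsankov

variable {R : V →ₗ[ℝ] V →ₗ[ℝ] V →ₗ[ℝ] V}
variable (hR : IsCurvatureOperator R) (hT : JacobiTsankov R)

include hT

lemma comm_J {x y : V} (h : ⟪x, y⟫_ℝ = 0) (w : V) :
    Jacobi R x (Jacobi R y w) = Jacobi R y (Jacobi R x w) := by
  have := LinearMap.ext_iff.mp (hT x y h) w
  simpa using this

lemma comm_MC {z a b : V} (h1 : ⟪z, a⟫_ℝ = 0) (h2 : ⟪z, b⟫_ℝ = 0) (w : V) :
    Jacobi R z (JacobiP R a b w) = JacobiP R a b (Jacobi R z w) := by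
  have hp : ⟪z, a + b⟫_ℝ = 0 := by rw [inner_add_right, h1, h2]; ring
  have hm : ⟪z, a - b⟫_ℝ = 0 := by rw [inner_sub_right, h1, h2]; ring
  have hq : ∀ w', JacobiP R a b w' =
      (4 : ℝ)⁻¹ • (Jacobi R (a + b) w' - Jacobi R (a - b) w') := by
    intro w'; rw [J_add_apply, J_sub_apply]; module
  rw [hq w, map_smul, map_sub, comm_J hT hp w, comm_J hT hm w, hq (Jacobi R z w)]

lemma comm_star {x y : V} (h : ⟪x, y⟫_ℝ = 0) (hn : ‖x‖ = ‖y‖) (w : V) :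
    Jacobi R x (JacobiP R x y w) + Jacobi R y (JacobiP R x y w) =
      JacobiP R x y (Jacobi R x w) + JacobiP R x y (Jacobi R y w) := by
  have hyx : ⟪y, x⟫_ℝ = 0 := by rw [real_inner_comm]; exact h
  have h0 : ⟪x + y, x - y⟫_ℝ = 0 := by
    simp only [inner_sub_right, inner_add_left, h, hyx, real_inner_self_eq_norm_sq, hn]
    ring
  have E := comm_J hT h0 w
  simp only [J_add_apply, J_sub_apply, map_add, map_sub, map_smul] at E
  linear_combination (norm := module) (-(4:ℝ)⁻¹) • E

include hR

lemma lemA {x y : V} {a : ℝ} (hx : ‖x‖ = 1) (hy : ‖y‖ = 1) (hxy : ⟪x, y⟫_ℝ = 0)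
    (h : Jacobi R x y = a • y) : Jacobi R y x = a • x := by
  have h1 : Jacobi R x (Jacobi R y x) = 0 := by
    rw [comm_J hT hxy x, J_self hR, map_zero]
  have h2 : Jacobi R y (Jacobi R y x) = a • Jacobi R y x := by
    have hs := comm_star hT hxy (by rw [hx, hy]) y
    simp only [JP_right hR, J_self hR, map_zero, map_smul, smul_zero, add_zero,
      zero_add, h, h1] at hs
    linear_combination (norm := module) (-2 : ℝ) • hs
  have h3 : ⟪x, Jacobi R y x⟫_ℝ = a := by
    rw [real_inner_comm, sect hR y x, h, inner_smul_left, starRingEnd_apply,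
      star_trivial, real_inner_self_eq_norm_sq, hy]
    ring
  have h3' : ⟪Jacobi R y x, x⟫_ℝ = a := by rw [real_inner_comm]; exact h3
  have h4 : ⟪Jacobi R y x, Jacobi R y x⟫_ℝ = a * a := by
    rw [J_symm hR y x (Jacobi R y x), h2, real_inner_smul_right, h3]
  have hxx : ⟪x, x⟫_ℝ = 1 := by rw [real_inner_self_eq_norm_sq, hx]; norm_num
  have h5 : ⟪Jacobi R y x - a • x, Jacobi R y x - a • x⟫_ℝ = 0 := by
    simp only [inner_sub_left, inner_sub_right, real_inner_smul_left,
      real_inner_smul_right, h4, hxx, h3, h3']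
    ring
  have h6 := eq_zero_of_inner_self h5
  linear_combination (norm := module) h6

lemma lemE {x y : V} (hx : ‖x‖ = 1) (hy : ‖y‖ = 1) (hxy : ⟪x, y⟫_ℝ = 0)
    (h : Jacobi R x y = 0) (w : V) : Jacobi R y (Jacobi R x w) = 0 := by
  have hyx : Jacobi R y x = 0 := by
    have := lemA hR hT hx hy hxy (a := 0) (by rw [h, zero_smul])
    rw [this, zero_smul]
  have hyx' : ⟪y, x⟫_ℝ = 0 := by rw [real_inner_comm]; exact hxy
  set w' := w - ⟪x, w⟫_ℝ • x - ⟪y, w⟫_ℝ • y with hw'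
  have hxw' : ⟪x, w'⟫_ℝ = 0 := by
    rw [hw']
    simp only [inner_sub_right, real_inner_smul_right, real_inner_self_eq_norm_sq,
      hx, hxy]
    ring
  have hyw' : ⟪y, w'⟫_ℝ = 0 := by
    rw [hw']
    simp only [inner_sub_right, real_inner_smul_right, real_inner_self_eq_norm_sq,
      hy, hyx']
    ring
  have hdecomp : w = w' + ⟪x, w⟫_ℝ • x + ⟪y, w⟫_ℝ • y := by rw [hw']; module
  have hJxw : Jacobi R x w = Jacobi R x w' := by
    conv_lhs => rw [hdecomp]
    rw [map_add, map_add, map_smul, map_smul, J_self hR, h, smul_zero, smul_zero,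
      add_zero, add_zero]
  have hx' : Jacobi R x w' = (-2 : ℝ) • JacobiP R x w' x := by
    have := JP_left hR x w'
    linear_combination (norm := module) (2 : ℝ) • this
  rw [hJxw, hx', map_smul, comm_MC hT hyx' hyw' x, hyx, map_zero, smul_zero]

lemma keyId {x y : V} (hn : ‖x‖ = ‖y‖) (hxy : ⟪x, y⟫_ℝ = 0) :
    Jacobi R x (Jacobi R x y) = (-2 : ℝ) • JacobiP R x y (Jacobi R y x) := by
  have hz : Jacobi R y (Jacobi R x y) = 0 := by
    rw [← comm_J hT hxy y, J_self hR, map_zero]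
  have hs := comm_star hT hxy hn x
  simp only [JP_left hR, J_self hR, map_zero, map_smul, smul_zero, add_zero,
    zero_add, hz] at hs
  linear_combination (norm := module) (-2 : ℝ) • hs

end Tsankov
section Structure

variable {R : V →ₗ[ℝ] V →ₗ[ℝ] V →ₗ[ℝ] V}

lemma rank1_structure [FiniteDimensional ℝ V] (T : V →ₗ[ℝ] V)
    (hsymT : ∀ u v : V, ⟪T u, v⟫_ℝ = ⟪u, T v⟫_ℝ)
    (hrk : Module.finrank ℝ (LinearMap.range T) ≤ 1)
    (hpos : 0 < Module.finrank ℝ V) :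
    ∃ (μ : ℝ) (k : V), ‖k‖ = 1 ∧ ∀ w, T w = (μ * ⟪k, w⟫_ℝ) • k := by
  by_cases hT0 : T = 0
  · have : Nontrivial V := Module.finrank_pos_iff.mp hpos
    obtain ⟨v, hv⟩ := exists_ne (0 : V)
    exact ⟨0, ‖v‖⁻¹ • v, norm_smul_inv_norm hv, fun w => by simp [hT0]⟩
  · have hne : ∃ w, T w ≠ 0 := by
      by_contra hc; push_neg at hc
      exact hT0 (LinearMap.ext fun w => by rw [hc w, LinearMap.zero_apply])
    obtain ⟨w₀, hw₀⟩ := hne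
    set k₀ := T w₀ with hk₀def
    have hk₀ : k₀ ≠ 0 := hw₀
    have hsp : (ℝ ∙ k₀) = LinearMap.range T := by
      apply Submodule.eq_of_le_of_finrank_le
      · rw [Submodule.span_le, Set.singleton_subset_iff]
        exact ⟨w₀, rfl⟩
      · rw [finrank_span_singleton hk₀]
        exact hrk
    set k := ‖k₀‖⁻¹ • k₀ with hkdef
    have hku : ‖k‖ = 1 := norm_smul_inv_norm hk₀
    have hkk : ⟪k, k⟫_ℝ = 1 := by rw [real_inner_self_eq_norm_sq, hku]; norm_num
    have hk₀k : ‖k₀‖ • k = k₀ := by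
      rw [hkdef, smul_smul, mul_inv_cancel₀ (norm_ne_zero_iff.mpr hk₀), one_smul]
    have hmem : ∀ w, ∃ d : ℝ, T w = d • k := by
      intro w
      have hm : T w ∈ LinearMap.range T := ⟨w, rfl⟩
      rw [← hsp] at hm
      obtain ⟨c, hc⟩ := Submodule.mem_span_singleton.mp hm
      refine ⟨c * ‖k₀‖, ?_⟩
      rw [← hc]
      conv_lhs => rw [← hk₀k]
      rw [smul_smul, mul_comm]
    have hcoef : ∀ w, T w = ⟪k, T w⟫_ℝ • k := by
      intro w
      obtain ⟨d, hd⟩ := hmem w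
      rw [hd, real_inner_smul_right, hkk, mul_one]
    refine ⟨⟪k, T k⟫_ℝ, k, hku, fun w => ?_⟩
    rw [hcoef w]
    congr 1
    rw [← hsymT k w]
    conv_lhs => rw [hcoef k]
    rw [real_inner_smul_left]

lemma orth_of_struct (hR : IsCurvatureOperator R) {z k : V} {a : ℝ}
    (hJ : ∀ w, Jacobi R z w = (a * ⟪k, w⟫_ℝ) • k) (ha : a ≠ 0) (hk : k ≠ 0) :
    ⟪k, z⟫_ℝ = 0 := by
  have h := hJ z
  rw [J_self hR] at h
  have := scalar_zero_of_smul hk h.symm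
  rcases mul_eq_zero.mp this with h' | h'
  · exact absurd h' ha
  · exact h'

lemma rank1_eigen' {z : V}
    (hstz : ∃ (μ : ℝ) (k : V), ‖k‖ = 1 ∧ ∀ w, Jacobi R z w = (μ * ⟪k, w⟫_ℝ) • k)
    {a : ℝ} {v : V} (hv : ‖v‖ = 1) (ha : a ≠ 0) (hev : Jacobi R z v = a • v) :
    ∀ w, Jacobi R z w = (a * ⟪v, w⟫_ℝ) • v := by
  obtain ⟨μ, k, hk, hJ⟩ := hstz
  have hvv : ⟪v, v⟫_ℝ = 1 := by rw [real_inner_self_eq_norm_sq, hv]; norm_num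
  have h1 : (μ * ⟪k, v⟫_ℝ) • k = a • v := by rw [← hJ v]; exact hev
  have hkv : μ * ⟪k, v⟫_ℝ * ⟪k, v⟫_ℝ = a := by
    have := congrArg (fun t => ⟪t, v⟫_ℝ) h1
    simpa only [real_inner_smul_left, hvv, mul_one] using this
  set c := μ * ⟪k, v⟫_ℝ with hcdef
  have hc : c ≠ 0 := by
    intro h0; apply ha; rw [← hkv, h0, zero_mul]
  have hk_eq : k = (c⁻¹ * a) • v := by
    calc k = c⁻¹ • (c • k) := by rw [smul_smul, inv_mul_cancel₀ hc, one_smul]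
    _ = c⁻¹ • (a • v) := by rw [h1]
    _ = (c⁻¹ * a) • v := by rw [smul_smul]
  set d := c⁻¹ * a with hddef
  have hd2 : d * d = 1 := by
    have hnk := hk
    rw [hk_eq, norm_smul, hv, mul_one, Real.norm_eq_abs] at hnk
    rw [← abs_mul_abs_self, hnk]; norm_num
  have hkvd : ⟪k, v⟫_ℝ = d := by
    rw [hk_eq, real_inner_smul_left, hvv, mul_one]
  have hmu : μ * (d * d) = a := by
    rw [hcdef, hkvd] at hkv; linarith [hkv]
  have hmua : μ = a := by rw [hd2, mul_one] at hmu; exact hmu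
  intro w
  rw [hJ w, hk_eq]
  rw [real_inner_smul_left, smul_smul]
  have hs : μ * (d * ⟪v, w⟫_ℝ) * d = a * ⟪v, w⟫_ℝ := by
    rw [← hmu]; ring
  rw [hs]

lemma detId' {z : V}
    (hstz : ∃ (μ : ℝ) (k : V), ‖k‖ = 1 ∧ ∀ w, Jacobi R z w = (μ * ⟪k, w⟫_ℝ) • k)
    (p q : V) :
    ⟪Jacobi R z p, q⟫_ℝ * ⟪Jacobi R z q, p⟫_ℝ
      = ⟪Jacobi R z p, p⟫_ℝ * ⟪Jacobi R z q, q⟫_ℝ := by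
  obtain ⟨μ, k, hk, hJ⟩ := hstz
  rw [hJ p, hJ q]
  simp only [real_inner_smul_left]
  ring

lemma exists_unit_J_ne (hR : IsCurvatureOperator R) (hne : R ≠ 0) :
    ∃ x : V, ‖x‖ = 1 ∧ Jacobi R x ≠ 0 := by
  by_contra hcon
  push_neg at hcon
  apply hne
  have hall : ∀ x y : V, R y x x = 0 := by
    intro x y
    rcases eq_or_ne x 0 with rfl | hx0
    · simp
    · have h1 := hcon (‖x‖⁻¹ • x) (norm_smul_inv_norm hx0)
      have h2 := LinearMap.ext_iff.mp h1 y
      rw [J_smul_apply, LinearMap.zero_apply] at h2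
      have hcne : (‖x‖⁻¹ * ‖x‖⁻¹ : ℝ) ≠ 0 := by
        have : (‖x‖ : ℝ) ≠ 0 := norm_ne_zero_iff.mpr hx0
        positivity
      have h3 : Jacobi R x y = 0 := by
        rcases smul_eq_zero.mp h2 with h' | h'
        · exact absurd h' hcne
        · exact h'
      rw [J_apply] at h3
      exact h3
  have hpol : ∀ x y z : V, R y x z + R y z x = 0 := by
    intro x y z
    have h := hall (x + z) y
    simp only [map_add, LinearMap.add_apply] at h
    linear_combination (norm := module) h - hall x y - hall z y
  have hcyc : ∀ a b c : V, R b c a = R a b c := by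
    intro a b c
    have h1 := hpol c b a
    have h2 := R_skew hR b a c
    linear_combination (norm := module) h1 - h2
  apply LinearMap.ext; intro x
  apply LinearMap.ext; intro y
  apply LinearMap.ext; intro z
  simp only [LinearMap.zero_apply]
  have hb := hR.2.2 x y z (R x y z)
  rw [hcyc x y z, hcyc y z x, hcyc x y z] at hb
  have h3 : (3 : ℝ) * ⟪R x y z, R x y z⟫_ℝ = 0 := by linarith
  have h4 : ⟪R x y z, R x y z⟫_ℝ = 0 := by linarith
  exact eq_zero_of_inner_self h4

end Structure
section Rank

variable {R : V →ₗ[ℝ] V →ₗ[ℝ] V →ₗ[ℝ] V}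
variable (hR : IsCurvatureOperator R) (hT : JacobiTsankov R)
include hR hT

lemma lemF {x e₁ e₂ : V} {l₁ l₂ : ℝ}
    (hx : ‖x‖ = 1) (he₁ : ‖e₁‖ = 1) (he₂ : ‖e₂‖ = 1)
    (o_xe₁ : ⟪x, e₁⟫_ℝ = 0) (o_xe₂ : ⟪x, e₂⟫_ℝ = 0) (o_e₁e₂ : ⟪e₁, e₂⟫_ℝ = 0)
    (h1 : Jacobi R x e₁ = l₁ • e₁) (h2 : Jacobi R x e₂ = l₂ • e₂)
    (hl₁ : l₁ ≠ 0) (hl₂ : l₂ ≠ 0) : l₁ = l₂ := by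
  have a1 : Jacobi R e₁ x = l₁ • x := lemA hR hT hx he₁ o_xe₁ h1
  have a2 : Jacobi R e₂ x = l₂ • x := lemA hR hT hx he₂ o_xe₂ h2
  have o1 : ⟪e₂, x⟫_ℝ = 0 := by rw [real_inner_comm]; exact o_xe₂
  have o2 : ⟪e₂, e₁⟫_ℝ = 0 := by rw [real_inner_comm]; exact o_e₁e₂
  have o3 : ⟪e₁, x⟫_ℝ = 0 := by rw [real_inner_comm]; exact o_xe₁
  have hb : Jacobi R e₂ e₁ = l₂ • e₁ := by
    have hmc := comm_MC hT o1 o2 x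
    simp only [JP_left hR, h1, a2, map_smul] at hmc
    have hmc2 : ((-(1/2) : ℝ) * l₁) • Jacobi R e₂ e₁
        = ((-(1/2) : ℝ) * l₁) • (l₂ • e₁) := by
      linear_combination (norm := module) hmc
    exact smul_cancel (mul_ne_zero (by norm_num) hl₁) hmc2
  have hc : Jacobi R e₁ e₂ = l₂ • e₂ := lemA hR hT he₂ he₁ o2 hb
  have hmc' := comm_MC hT o3 o_e₁e₂ x
  simp only [JP_left hR, h2, a1, map_smul, hc] at hmc'
  have hsc : ((-(1/2) : ℝ) * (l₂ * l₂)) • e₂ = ((-(1/2) : ℝ) * (l₁ * l₂)) • e₂ := by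
    linear_combination (norm := module) hmc'
  have hsc2 := scalar_of_smul_unit (unit_ne_zero he₂) hsc
  have hsc3 : l₂ * l₂ = l₁ * l₂ := by linarith
  exact (mul_right_cancel₀ hl₂ hsc3).symm

lemma lemG {x e₁ e₂ y : V} {l : ℝ}
    (hx : ‖x‖ = 1) (he₁ : ‖e₁‖ = 1) (he₂ : ‖e₂‖ = 1) (hy : ‖y‖ = 1)
    (o_xe₁ : ⟪x, e₁⟫_ℝ = 0) (o_xe₂ : ⟪x, e₂⟫_ℝ = 0) (o_e₁e₂ : ⟪e₁, e₂⟫_ℝ = 0)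
    (o_xy : ⟪x, y⟫_ℝ = 0) (o_e₁y : ⟪e₁, y⟫_ℝ = 0) (o_e₂y : ⟪e₂, y⟫_ℝ = 0)
    (h1 : Jacobi R x e₁ = l • e₁) (h2 : Jacobi R x e₂ = l • e₂)
    (h3 : Jacobi R x y = 0) (hl : l ≠ 0) : False := by
  have hxx : ⟪x, x⟫_ℝ = 1 := by rw [real_inner_self_eq_norm_sq, hx]; norm_num
  have he₁e₁ : ⟪e₁, e₁⟫_ℝ = 1 := by rw [real_inner_self_eq_norm_sq, he₁]; norm_num
  have hyy : ⟪y, y⟫_ℝ = 1 := by rw [real_inner_self_eq_norm_sq, hy]; norm_num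
  have o_e₁x : ⟪e₁, x⟫_ℝ = 0 := by rw [real_inner_comm]; exact o_xe₁
  have o_yx : ⟪y, x⟫_ℝ = 0 := by rw [real_inner_comm]; exact o_xy
  have o_ye₁ : ⟪y, e₁⟫_ℝ = 0 := by rw [real_inner_comm]; exact o_e₁y
  have o_e₂e₁ : ⟪e₂, e₁⟫_ℝ = 0 := by rw [real_inner_comm]; exact o_e₁e₂
  have s1 : Jacobi R e₁ x = l • x := lemA hR hT hx he₁ o_xe₁ h1
  have s2 : Jacobi R e₂ x = l • x := lemA hR hT hx he₂ o_xe₂ h2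
  have s3 : Jacobi R y x = 0 := by
    have h3' : Jacobi R x y = (0 : ℝ) • y := by rw [h3, zero_smul]
    have := lemA hR hT hx hy o_xy h3'
    rw [zero_smul] at this; exact this
  set u := JacobiP R e₁ y x with hu
  have s5 : Jacobi R x u = 0 := by
    rw [hu, comm_MC hT o_xe₁ o_xy x, J_self hR, map_zero]
  have s6 : Jacobi R e₂ u = l • u := by
    rw [hu, comm_MC hT o_e₂e₁ o_e₂y x, s2, map_smul]
  have s7 : ⟪u, x⟫_ℝ = 0 := by
    rw [hu, JP_apply, inner_add_left, real_inner_smul_left, real_inner_smul_left]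
    have q1 : ⟪R x e₁ y, x⟫_ℝ = 0 := by
      rw [hR.1 x e₁ y x, ← J_apply R x y, h3, inner_zero_left]
    have q2 : ⟪R x y e₁, x⟫_ℝ = 0 := by
      rw [hR.1 x y e₁ x, ← J_apply R x e₁, h1, real_inner_smul_left, o_e₁y, mul_zero]
    rw [q1, q2]; ring
  -- norm of u
  set σ : ℝ := (Real.sqrt 2)⁻¹ with hσdef
  have hσ : σ * σ = 1/2 := by
    have h2' : Real.sqrt 2 * Real.sqrt 2 = 2 := Real.mul_self_sqrt (by norm_num)
    rw [hσdef, ← mul_inv, h2']; norm_num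
  set p := σ • e₁ + σ • y with hp
  have hpp : ⟪p, p⟫_ℝ = 1 := by
    rw [hp]
    simp only [inner_add_left, inner_add_right, real_inner_smul_left,
      real_inner_smul_right, he₁e₁, hyy, o_e₁y, o_ye₁]
    linear_combination (2 : ℝ) * hσ
  have hpunit : ‖p‖ = 1 := norm_eq_one_of_inner_self hpp
  have o_px : ⟪p, x⟫_ℝ = 0 := by
    rw [hp]
    simp only [inner_add_left, real_inner_smul_left, o_e₁x, o_yx]
    ring
  have hJpx : Jacobi R p x = (l/2) • x + u := by
    rw [hp, J_combo, s1, s3, hσ, ← hu]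
    module
  have hJxp : Jacobi R x p = (σ * l) • e₁ := by
    rw [hp, map_add, map_smul, map_smul, h1, h3, smul_zero, add_zero, smul_smul]
  have hkey := keyId hR hT (show ‖p‖ = ‖x‖ by rw [hpunit, hx]) o_px
  have hL : ⟪Jacobi R p (Jacobi R p x), x⟫_ℝ = l*l/4 + ⟪u, u⟫_ℝ := by
    rw [hJpx, map_add, map_smul, inner_add_left, real_inner_smul_left, hJpx,
      inner_add_left, real_inner_smul_left, hxx, s7,
      J_symm hR p u x, hJpx, inner_add_right, real_inner_smul_right, s7]
    ring
  have hR1 : JacobiP R p x x = ((-(1/2) : ℝ) * (σ * l)) • e₁ := by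
    rw [JP_comm R p x, JP_left hR, hJxp, smul_smul]
  have hR2 : ⟪(-2 : ℝ) • JacobiP R p x (Jacobi R x p), x⟫_ℝ = (σ*σ)*(l*l) := by
    rw [hJxp, map_smul, real_inner_smul_left, real_inner_smul_left,
      JP_symm hR p x e₁ x, hR1, real_inner_smul_right, he₁e₁]
    ring
  have huu : ⟪u, u⟫_ℝ = l*l/4 := by
    have := congrArg (fun t => ⟪t, x⟫_ℝ) hkey
    rw [hL, hR2, hσ] at this
    linarith
  have hune : u ≠ 0 := by
    intro h0
    rw [h0, inner_zero_left] at huu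
    have := mul_self_pos.mpr hl
    linarith
  -- final contradiction
  set un := ‖u‖⁻¹ • u with hun
  have hunu : ‖un‖ = 1 := norm_smul_inv_norm hune
  have hxun : Jacobi R x un = 0 := by rw [hun, map_smul, s5, smul_zero]
  have o_xun : ⟪x, un⟫_ℝ = 0 := by
    rw [hun, real_inner_smul_right, real_inner_comm, s7, mul_zero]
  have o_ue₂ : ⟪u, e₂⟫_ℝ = 0 := by
    have hh := J_symm hR e₂ u e₂
    rw [s6, J_self hR, inner_zero_right, real_inner_smul_left] at hh
    rcases mul_eq_zero.mp hh with h' | h'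
    · exact absurd h' hl
    · exact h'
  have o_e₂un : ⟪e₂, un⟫_ℝ = 0 := by
    rw [hun, real_inner_smul_right, real_inner_comm, o_ue₂, mul_zero]
  have s11 : Jacobi R e₂ un = l • un := by
    rw [hun, map_smul, s6, smul_comm]
  have s12 : Jacobi R un e₂ = l • e₂ := lemA hR hT he₂ hunu o_e₂un s11
  have s13 := lemE hR hT hx hunu o_xun hxun e₂
  rw [h2, map_smul, s12, smul_smul] at s13
  have := scalar_zero_of_smul (unit_ne_zero he₂) s13
  exact hl (mul_self_eq_zero.mp this)

lemma rank_le_one_J [FiniteDimensional ℝ V]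
    (hm : 3 ≤ Module.finrank ℝ V)
    (hsmall : ∀ z : V, Module.finrank ℝ (LinearMap.range (Jacobi R z)) <
      Module.finrank ℝ V - 1) :
    ∀ x : V, ‖x‖ = 1 → Module.finrank ℝ (LinearMap.range (Jacobi R x)) ≤ 1 := by
  intro x hx
  by_contra hcon
  push_neg at hcon
  have hsymT : (Jacobi R x).IsSymmetric := fun u v => J_symm hR x u v
  set n := Module.finrank ℝ V with hn
  set b := hsymT.eigenvectorBasis rfl.symm with hb
  set μ := hsymT.eigenvalues rfl.symm with hμ
  have hbe : ∀ i, Jacobi R x (b i) = μ i • b i := fun i =>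
    hsymT.apply_eigenvectorBasis rfl.symm i
  have h2 : ∃ i j, i ≠ j ∧ μ i ≠ 0 ∧ μ j ≠ 0 := by
    by_contra hno
    push_neg at hno
    have hle1 : Module.finrank ℝ (LinearMap.range (Jacobi R x)) ≤ 1 := by
      by_cases hz : ∀ i, μ i = 0
      · have hT0 : Jacobi R x = 0 := by
          apply b.toBasis.ext
          intro i
          simp [hbe i, hz i]
        rw [hT0, LinearMap.range_zero]
        simp
      · push_neg at hz
        obtain ⟨i₀, hi₀⟩ := hz
        have hle : LinearMap.range (Jacobi R x) ≤ ℝ ∙ (b i₀) := by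
          rintro _ ⟨v, rfl⟩
          have hv : v = ∑ i, ⟪b i, v⟫_ℝ • b i := by
            conv_lhs => rw [← b.sum_repr v]
            exact Finset.sum_congr rfl fun i _ => by rw [b.repr_apply_apply]
          rw [hv, map_sum]
          apply Submodule.sum_mem
          intro i _
          rw [map_smul, hbe i]
          rcases eq_or_ne i i₀ with rfl | hne
          · exact Submodule.smul_mem _ _ (Submodule.smul_mem _ _
              (Submodule.mem_span_singleton_self _))
          · by_cases hmi : μ i = 0
            · rw [hmi, zero_smul, smul_zero]; exact Submodule.zero_mem _
            · exact absurd (hno i i₀ hne hmi) hi₀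
        calc Module.finrank ℝ (LinearMap.range (Jacobi R x))
            ≤ Module.finrank ℝ (ℝ ∙ (b i₀)) := Submodule.finrank_mono hle
          _ ≤ 1 := by
              rw [finrank_span_singleton (unit_ne_zero (b.orthonormal.1 i₀))]
    omega
  obtain ⟨i, j, hij, hμi, hμj⟩ := h2
  have he₁ : ‖b i‖ = 1 := b.orthonormal.1 i
  have he₂ : ‖b j‖ = 1 := b.orthonormal.1 j
  have o12 : ⟪b i, b j⟫_ℝ = 0 := b.orthonormal.2 hij
  have oxi : ⟪x, b i⟫_ℝ = 0 := by
    have h' := hsymT x (b i)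
    rw [J_self hR, inner_zero_left, hbe i, real_inner_smul_right] at h'
    rcases mul_eq_zero.mp h'.symm with h'' | h''
    · exact absurd h'' hμi
    · exact h''
  have oxj : ⟪x, b j⟫_ℝ = 0 := by
    have h' := hsymT x (b j)
    rw [J_self hR, inner_zero_left, hbe j, real_inner_smul_right] at h'
    rcases mul_eq_zero.mp h'.symm with h'' | h''
    · exact absurd h'' hμj
    · exact h''
  have hleq : μ i = μ j := lemF hR hT hx he₁ he₂ oxi oxj o12 (hbe i) (hbe j) hμi hμj
  -- kernel vector
  have hrsum := LinearMap.finrank_range_add_finrank_ker (Jacobi R x)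
  have hsm := hsmall x
  have hker2 : 2 ≤ Module.finrank ℝ (LinearMap.ker (Jacobi R x)) := by omega
  have hxne : x ≠ 0 := unit_ne_zero hx
  have hspan1 : Module.finrank ℝ (ℝ ∙ x) = 1 := finrank_span_singleton hxne
  have horth := Submodule.finrank_add_finrank_orthogonal (K := ℝ ∙ x)
  have hsupinf := Submodule.finrank_sup_add_finrank_inf_eq
    (LinearMap.ker (Jacobi R x)) (ℝ ∙ x)ᗮ
  have hsmax := Submodule.finrank_le (LinearMap.ker (Jacobi R x) ⊔ (ℝ ∙ x)ᗮ)
  have hKpos : 1 ≤ Module.finrank ℝ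
      ↥(LinearMap.ker (Jacobi R x) ⊓ (ℝ ∙ x)ᗮ) := by omega
  have hKne : (LinearMap.ker (Jacobi R x) ⊓ (ℝ ∙ x)ᗮ) ≠ ⊥ := by
    intro hbot
    rw [hbot, finrank_bot] at hKpos
    omega
  obtain ⟨y₀, hy₀mem, hy₀ne⟩ := Submodule.ne_bot_iff _ |>.mp hKne
  set y := ‖y₀‖⁻¹ • y₀ with hydef
  have hyu : ‖y‖ = 1 := norm_smul_inv_norm hy₀ne
  have hJxy : Jacobi R x y = 0 := by
    rw [hydef, map_smul, LinearMap.mem_ker.mp hy₀mem.1, smul_zero]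
  have oxy : ⟪x, y⟫_ℝ = 0 := by
    have := Submodule.mem_orthogonal_singleton_iff_inner_right.mp hy₀mem.2
    rw [hydef, real_inner_smul_right, this, mul_zero]
  have oye₁ : ⟪b i, y⟫_ℝ = 0 := by
    have h' := hsymT y (b i)
    rw [hbe i, real_inner_smul_right, hJxy, inner_zero_left] at h'
    have : ⟪y, b i⟫_ℝ = 0 := by
      rcases mul_eq_zero.mp h'.symm with h'' | h''
      · exact absurd h'' hμi
      · exact h''
    rw [real_inner_comm]; exact this
  have oye₂ : ⟪b j, y⟫_ℝ = 0 := by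
    have h' := hsymT y (b j)
    rw [hbe j, real_inner_smul_right, hJxy, inner_zero_left] at h'
    have : ⟪y, b j⟫_ℝ = 0 := by
      rcases mul_eq_zero.mp h'.symm with h'' | h''
      · exact absurd h'' hμj
      · exact h''
    rw [real_inner_comm]; exact this
  exact lemG hR hT hx he₁ he₂ hyu oxi oxj o12 oxy oye₁ oye₂ (hbe i)
    (hleq ▸ hbe j) hJxy hμi

end Rank
section CircleSec

variable {R : V →ₗ[ℝ] V →ₗ[ℝ] V →ₗ[ℝ] V}
variable (hR : IsCurvatureOperator R) (hT : JacobiTsankov R)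
variable (hST : ∀ z : V, ‖z‖ = 1 →
  ∃ (μ : ℝ) (k : V), ‖k‖ = 1 ∧ ∀ w, Jacobi R z w = (μ * ⟪k, w⟫_ℝ) • k)

include hR hT

lemma structJf {x f : V} {a : ℝ} (hx : ‖x‖ = 1) (hf : ‖f‖ = 1) (ha : a ≠ 0)
    (hJx : ∀ w, Jacobi R x w = (a * ⟪f, w⟫_ℝ) • f)
    (hstf : ∃ (μ : ℝ) (k : V), ‖k‖ = 1 ∧ ∀ w, Jacobi R f w = (μ * ⟪k, w⟫_ℝ) • k) :
    ∀ w, Jacobi R f w = (a * ⟪x, w⟫_ℝ) • x := by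
  have hff : ⟪f, f⟫_ℝ = 1 := by rw [real_inner_self_eq_norm_sq, hf]; norm_num
  have hJxf : Jacobi R x f = a • f := by rw [hJx f, hff, mul_one]
  have o_fx : ⟪f, x⟫_ℝ = 0 := orth_of_struct hR hJx ha (unit_ne_zero hf)
  have o_xf : ⟪x, f⟫_ℝ = 0 := by rw [real_inner_comm]; exact o_fx
  have hJfx : Jacobi R f x = a • x := lemA hR hT hx hf o_xf hJxf
  exact rank1_eigen' hstf hx ha hJfx

lemma circleC {x f : V} {a : ℝ} (hx : ‖x‖ = 1) (hf : ‖f‖ = 1) (ha : a ≠ 0)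
    (hJx : ∀ w, Jacobi R x w = (a * ⟪f, w⟫_ℝ) • f)
    (hJf : ∀ w, Jacobi R f w = (a * ⟪x, w⟫_ℝ) • x)
    (hstu : ∀ z : V, ‖z‖ = 1 →
      ∃ (μ : ℝ) (k : V), ‖k‖ = 1 ∧ ∀ w, Jacobi R z w = (μ * ⟪k, w⟫_ℝ) • k) :
    ∀ w, JacobiP R x f w
      = (-(a/2) * ⟪x, w⟫_ℝ) • f + (-(a/2) * ⟪f, w⟫_ℝ) • x := by
  have hff : ⟪f, f⟫_ℝ = 1 := by rw [real_inner_self_eq_norm_sq, hf]; norm_num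
  have hxx : ⟪x, x⟫_ℝ = 1 := by rw [real_inner_self_eq_norm_sq, hx]; norm_num
  have o_fx : ⟪f, x⟫_ℝ = 0 := orth_of_struct hR hJx ha (unit_ne_zero hf)
  have o_xf : ⟪x, f⟫_ℝ = 0 := by rw [real_inner_comm]; exact o_fx
  have hJxf : Jacobi R x f = a • f := by rw [hJx f, hff, mul_one]
  have hJfx : Jacobi R f x = a • x := by rw [hJf x, hxx, mul_one]
  set σ : ℝ := (Real.sqrt 2)⁻¹ with hσdef
  have hσ : σ * σ = 1/2 := by
    have h2' : Real.sqrt 2 * Real.sqrt 2 = 2 := Real.mul_self_sqrt (by norm_num)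
    rw [hσdef, ← mul_inv, h2']; norm_num
  set u := σ • x + σ • f with hu2
  have huu : ⟪u, u⟫_ℝ = 1 := by
    rw [hu2]
    simp only [inner_add_left, inner_add_right, real_inner_smul_left,
      real_inner_smul_right, hxx, hff, o_xf, o_fx]
    linear_combination (2 : ℝ) * hσ
  have hunit : ‖u‖ = 1 := norm_eq_one_of_inner_self huu
  have e1 : Jacobi R x (σ • x - σ • f) = (-(σ * a)) • f := by
    rw [map_sub, map_smul, map_smul, J_self hR, hJxf, smul_zero, smul_smul]
    module
  have e2 : Jacobi R f (σ • x - σ • f) = (σ * a) • x := by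
    rw [map_sub, map_smul, map_smul, J_self hR, hJfx, smul_zero, smul_smul]
    module
  have e3 : JacobiP R x f (σ • x - σ • f)
      = (-(σ * a/2)) • f + (σ * a/2) • x := by
    rw [map_sub, map_smul, map_smul, JP_left hR, JP_right hR, hJxf, hJfx]
    module
  have hv'1 : Jacobi R u (σ • x - σ • f) = a • (σ • x - σ • f) := by
    rw [hu2, J_combo, e1, e2, e3, hσ]
    module
  have hv'i : ⟪σ • x - σ • f, σ • x - σ • f⟫_ℝ = 1 := by
    simp only [inner_sub_left, inner_sub_right, real_inner_smul_left,
      real_inner_smul_right, hxx, hff, o_xf, o_fx]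
    linear_combination (2 : ℝ) * hσ
  have hv'u : ‖σ • x - σ • f‖ = 1 := norm_eq_one_of_inner_self hv'i
  have hJu := rank1_eigen' (hstu u hunit) hv'u ha hv'1
  have hJu' : ∀ w, Jacobi R u w = ((a/2) * ⟪x - f, w⟫_ℝ) • (x - f) := by
    intro w
    rw [hJu w]
    have hsf : σ • x - σ • f = σ • (x - f) := (smul_sub σ x f).symm
    rw [hsf, real_inner_smul_left, smul_smul]
    have hsc : a * (σ * ⟪x - f, w⟫_ℝ) * σ = (σ * σ) * (a * ⟪x - f, w⟫_ℝ) := by ring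
    rw [hsc, hσ]
    module
  intro w
  have hw : JacobiP R x f w = Jacobi R u w
      - (1/2 : ℝ) • Jacobi R x w - (1/2 : ℝ) • Jacobi R f w := by
    rw [hu2, J_combo, hσ]
    module
  rw [hw, hJu' w, hJx w, hJf w, inner_sub_left]
  module

lemma span_case {x f : V} {a : ℝ} (hx : ‖x‖ = 1) (hf : ‖f‖ = 1) (ha : a ≠ 0)
    (hJx : ∀ w, Jacobi R x w = (a * ⟪f, w⟫_ℝ) • f)
    (hJf : ∀ w, Jacobi R f w = (a * ⟪x, w⟫_ℝ) • x)
    (hC : ∀ w, JacobiP R x f w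
      = (-(a/2) * ⟪x, w⟫_ℝ) • f + (-(a/2) * ⟪f, w⟫_ℝ) • x)
    (c₁ c₂ : ℝ) :
    ∀ w, Jacobi R (c₁ • x + c₂ • f) w
      = (a * ⟪c₂ • x - c₁ • f, w⟫_ℝ) • (c₂ • x - c₁ • f) := by
  intro w
  rw [J_combo, hJx w, hJf w, hC w, inner_sub_left, real_inner_smul_left,
    real_inner_smul_left]
  module

end CircleSec
section CfSec

variable {R : V →ₗ[ℝ] V →ₗ[ℝ] V →ₗ[ℝ] V}
variable (hR : IsCurvatureOperator R) (hT : JacobiTsankov R)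

include hR hT

lemma CfEqs {x y f : V} {a : ℝ}
    (hx : ‖x‖ = 1) (hy : ‖y‖ = 1) (hf : ‖f‖ = 1) (ha : a ≠ 0)
    (o_xy : ⟪x, y⟫_ℝ = 0) (o_yf : ⟪y, f⟫_ℝ = 0)
    (hJx : ∀ w, Jacobi R x w = (a * ⟪f, w⟫_ℝ) • f)
    (hJf : ∀ w, Jacobi R f w = (a * ⟪x, w⟫_ℝ) • x)
    (hJyf : Jacobi R y f = 0)
    (hCxf : ∀ w, JacobiP R x f w
      = (-(a/2) * ⟪x, w⟫_ℝ) • f + (-(a/2) * ⟪f, w⟫_ℝ) • x) :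
    (Jacobi R x (JacobiP R x y f) + Jacobi R y (JacobiP R x y f)
        = a • JacobiP R x y f) ∧
    JacobiP R x y (JacobiP R x y f) = (a*a/4) • f := by
  have hff : ⟪f, f⟫_ℝ = 1 := by rw [real_inner_self_eq_norm_sq, hf]; norm_num
  have hxx : ⟪x, x⟫_ℝ = 1 := by rw [real_inner_self_eq_norm_sq, hx]; norm_num
  have hyy : ⟪y, y⟫_ℝ = 1 := by rw [real_inner_self_eq_norm_sq, hy]; norm_num
  have o_fx : ⟪f, x⟫_ℝ = 0 := orth_of_struct hR hJx ha (unit_ne_zero hf)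
  have o_xf : ⟪x, f⟫_ℝ = 0 := by rw [real_inner_comm]; exact o_fx
  have o_fy : ⟪f, y⟫_ℝ = 0 := by rw [real_inner_comm]; exact o_yf
  have o_yx : ⟪y, x⟫_ℝ = 0 := by rw [real_inner_comm]; exact o_xy
  have hJxf : Jacobi R x f = a • f := by rw [hJx f, hff, mul_one]
  set σ : ℝ := (Real.sqrt 2)⁻¹ with hσdef
  have hσ : σ * σ = 1/2 := by
    have h2' : Real.sqrt 2 * Real.sqrt 2 = 2 := Real.mul_self_sqrt (by norm_num)
    rw [hσdef, ← mul_inv, h2']; norm_num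
  set Cf := JacobiP R x y f with hCfdef
  -- u computations
  set u := σ • x + σ • y with hudef
  have huu : ⟪u, u⟫_ℝ = 1 := by
    rw [hudef]
    simp only [inner_add_left, inner_add_right, real_inner_smul_left,
      real_inner_smul_right, hxx, hyy, o_xy, o_yx]
    linear_combination (2 : ℝ) * hσ
  have hu_unit : ‖u‖ = 1 := norm_eq_one_of_inner_self huu
  have o_uf : ⟪u, f⟫_ℝ = 0 := by
    rw [hudef]
    simp only [inner_add_left, real_inner_smul_left, o_xf, o_yf]
    ring
  have hxu : ⟪x, u⟫_ℝ = σ := by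
    rw [hudef]
    simp only [inner_add_right, real_inner_smul_right, hxx, o_xy]
    ring
  have hq1 : Jacobi R f u = (a * σ) • x := by rw [hJf u, hxu]
  have hyfx : JacobiP R y f x = - Cf := by
    have hcyc := JP_cyclic hR y f x
    have hz : JacobiP R f x y = 0 := by
      rw [JP_comm R f x, hCxf y, o_xy, o_fy]
      simp
    rw [hz] at hcyc
    have : JacobiP R y f x + JacobiP R x y f = 0 := by
      linear_combination (norm := module) hcyc
    linear_combination (norm := module) this
  have hq2 : JacobiP R u f x = σ • ((-(a/2)) • f) + σ • (- Cf) := by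
    rw [hudef, JP_combo_left, hyfx, JP_left hR, hJxf]
    module
  have hJuf : Jacobi R u f = (a/2) • f + Cf := by
    rw [hudef, J_combo, hσ, hJxf, hJyf, ← hCfdef]
    module
  have hJuCf : Jacobi R u Cf = (1/2 : ℝ) • Jacobi R x Cf
      + (1/2 : ℝ) • Jacobi R y Cf + JacobiP R x y Cf := by
    rw [hudef, J_combo, hσ]
    module
  have hLHSU : Jacobi R u (Jacobi R u f)
      = (a*a/4) • f + (a/2) • Cf + ((1/2 : ℝ) • Jacobi R x Cf
        + (1/2 : ℝ) • Jacobi R y Cf + JacobiP R x y Cf) := by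
    rw [hJuf, map_add, map_smul, hJuf, hJuCf]
    module
  have hRHSU : (-2 : ℝ) • JacobiP R u f (Jacobi R f u)
      = (a*a/2) • f + a • Cf := by
    rw [hq1, map_smul, hq2]
    have hss : (-2 : ℝ) • ((a * σ) • (σ • ((-(a/2)) • f) + σ • (- Cf)))
        = (-2 * (σ * σ)) • (a • ((-(a/2)) • f + (- Cf))) := by
      module
    rw [hss, hσ]
    module
  have hkeyU := keyId hR hT (show ‖u‖ = ‖f‖ by rw [hu_unit, hf]) o_uf
  have EqU : (a*a/4) • f + (a/2) • Cf + ((1/2 : ℝ) • Jacobi R x Cf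
      + (1/2 : ℝ) • Jacobi R y Cf + JacobiP R x y Cf)
      = (a*a/2) • f + a • Cf := by
    rw [← hLHSU, ← hRHSU]; exact hkeyU
  -- v computations
  set v := σ • x + (-σ) • y with hvdef
  have hvv : ⟪v, v⟫_ℝ = 1 := by
    rw [hvdef]
    simp only [inner_add_left, inner_add_right, real_inner_smul_left,
      real_inner_smul_right, hxx, hyy, o_xy, o_yx]
    linear_combination (2 : ℝ) * hσ
  have hv_unit : ‖v‖ = 1 := norm_eq_one_of_inner_self hvv
  have o_vf : ⟪v, f⟫_ℝ = 0 := by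
    rw [hvdef]
    simp only [inner_add_left, real_inner_smul_left, o_xf, o_yf]
    ring
  have hxv : ⟪x, v⟫_ℝ = σ := by
    rw [hvdef]
    simp only [inner_add_right, real_inner_smul_right, hxx, o_xy]
    ring
  have hq1v : Jacobi R f v = (a * σ) • x := by rw [hJf v, hxv]
  have hq2v : JacobiP R v f x = σ • ((-(a/2)) • f) + (-σ) • (- Cf) := by
    rw [hvdef, JP_combo_left, hyfx, JP_left hR, hJxf]
    module
  have hJvf : Jacobi R v f = (a/2) • f - Cf := by
    rw [hvdef, J_combo, hJxf, hJyf, ← hCfdef,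
      show (σ*σ : ℝ) = 1/2 from hσ,
      show ((-σ)*(-σ) : ℝ) = 1/2 by linear_combination hσ,
      show (2*(σ*(-σ)) : ℝ) = -1 by linear_combination (-2:ℝ)*hσ]
    module
  have hJvCf : Jacobi R v Cf = (1/2 : ℝ) • Jacobi R x Cf
      + (1/2 : ℝ) • Jacobi R y Cf - JacobiP R x y Cf := by
    rw [hvdef, J_combo,
      show (σ*σ : ℝ) = 1/2 from hσ,
      show ((-σ)*(-σ) : ℝ) = 1/2 by linear_combination hσ,
      show (2*(σ*(-σ)) : ℝ) = -1 by linear_combination (-2:ℝ)*hσ]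
    module
  have hLHSV : Jacobi R v (Jacobi R v f)
      = (a*a/4) • f - (a/2) • Cf - ((1/2 : ℝ) • Jacobi R x Cf
        + (1/2 : ℝ) • Jacobi R y Cf - JacobiP R x y Cf) := by
    rw [hJvf, map_sub, map_smul, hJvf, hJvCf]
    module
  have hRHSV : (-2 : ℝ) • JacobiP R v f (Jacobi R f v)
      = (a*a/2) • f - a • Cf := by
    rw [hq1v, map_smul, hq2v]
    have hss : (-2 : ℝ) • ((a * σ) • (σ • ((-(a/2)) • f) + (-σ) • (- Cf)))
        = (-2 * (σ * σ)) • (a • ((-(a/2)) • f + Cf)) := by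
      module
    rw [hss, hσ]
    module
  have hkeyV := keyId hR hT (show ‖v‖ = ‖f‖ by rw [hv_unit, hf]) o_vf
  have EqV : (a*a/4) • f - (a/2) • Cf - ((1/2 : ℝ) • Jacobi R x Cf
      + (1/2 : ℝ) • Jacobi R y Cf - JacobiP R x y Cf)
      = (a*a/2) • f - a • Cf := by
    rw [← hLHSV, ← hRHSV]; exact hkeyV
  constructor
  · linear_combination (norm := module) EqU - EqV
  · linear_combination (norm := module) ((1/2 : ℝ)) • EqU + ((1/2 : ℝ)) • EqV

lemma SL2aux {x y f : V} {a c d : ℝ}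
    (hf : ‖f‖ = 1) (ha : a ≠ 0) (hd : d ≠ 0)
    (hz_unit : ‖c • x + d • y‖ = 1)
    (hzf : ⟪c • x + d • y, f⟫_ℝ = 0)
    (hJf : ∀ w, Jacobi R f w = (a * ⟪x, w⟫_ℝ) • x)
    (o_xy : ⟪x, y⟫_ℝ = 0) (hyy : ⟪y, y⟫_ℝ = 1)
    (hJzf : Jacobi R (c • x + d • y) f = a • f) : False := by
  have h1 := lemA hR hT hz_unit hf hzf hJzf
  rw [hJf _] at h1
  have h2 := congrArg (fun t => ⟪t, y⟫_ℝ) h1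
  simp only [real_inner_smul_left, inner_add_left, o_xy, hyy] at h2
  have : a * d = 0 := by linarith
  exact (mul_ne_zero ha hd) this

lemma hop2forcing {x y f : V} {a : ℝ}
    (hst : ∀ z : V, ‖z‖ = 1 →
      ∃ (μ : ℝ) (k : V), ‖k‖ = 1 ∧ ∀ w, Jacobi R z w = (μ * ⟪k, w⟫_ℝ) • k)
    (hx : ‖x‖ = 1) (hy : ‖y‖ = 1) (hf : ‖f‖ = 1) (ha : a ≠ 0)
    (o_xy : ⟪x, y⟫_ℝ = 0) (o_yf : ⟪y, f⟫_ℝ = 0)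
    (hJx : ∀ w, Jacobi R x w = (a * ⟪f, w⟫_ℝ) • f)
    (hJy0 : ∀ w, Jacobi R y w = 0) : False := by
  have hff : ⟪f, f⟫_ℝ = 1 := by rw [real_inner_self_eq_norm_sq, hf]; norm_num
  have hyy : ⟪y, y⟫_ℝ = 1 := by rw [real_inner_self_eq_norm_sq, hy]; norm_num
  have hxx : ⟪x, x⟫_ℝ = 1 := by rw [real_inner_self_eq_norm_sq, hx]; norm_num
  have o_fx : ⟪f, x⟫_ℝ = 0 := orth_of_struct hR hJx ha (unit_ne_zero hf)
  have o_xf : ⟪x, f⟫_ℝ = 0 := by rw [real_inner_comm]; exact o_fx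
  have o_yx : ⟪y, x⟫_ℝ = 0 := by rw [real_inner_comm]; exact o_xy
  have o_fy : ⟪f, y⟫_ℝ = 0 := by rw [real_inner_comm]; exact o_yf
  have hJxf : Jacobi R x f = a • f := by rw [hJx f, hff, mul_one]
  have hJf : ∀ w, Jacobi R f w = (a * ⟪x, w⟫_ℝ) • x :=
    structJf hR hT hx hf ha hJx (hst f hf)
  have hCxf := circleC hR hT hx hf ha hJx hJf hst
  obtain ⟨A, B⟩ := CfEqs hR hT hx hy hf ha o_xy o_yf hJx hJf (hJy0 f) hCxf
  rw [hJy0 _, add_zero] at A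
  set Cf := JacobiP R x y f with hCfdef
  set t := ⟪f, Cf⟫_ℝ with htdef
  have hCfval : a • Cf = (a * t) • f := by rw [← A, hJx Cf, htdef]
  have hCf : Cf = t • f := by
    apply smul_cancel ha
    rw [hCfval, smul_smul]
  have ht2 : t * t = a*a/4 := by
    rw [hCf, map_smul, ← hCfdef, hCf, smul_smul] at B
    exact scalar_of_smul_unit (unit_ne_zero hf) B
  set σ : ℝ := (Real.sqrt 2)⁻¹ with hσdef
  have hσ : σ * σ = 1/2 := by
    have h2' : Real.sqrt 2 * Real.sqrt 2 = 2 := Real.mul_self_sqrt (by norm_num)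
    rw [hσdef, ← mul_inv, h2']; norm_num
  have hσne : σ ≠ 0 := by
    rw [hσdef]
    simp [Real.sqrt_eq_zero']
  have hu_unit : ‖σ • x + σ • y‖ = 1 := by
    apply norm_eq_one_of_inner_self
    simp only [inner_add_left, inner_add_right, real_inner_smul_left,
      real_inner_smul_right, hxx, hyy, o_xy, o_yx]
    linear_combination (2 : ℝ) * hσ
  have hv_unit : ‖σ • x + (-σ) • y‖ = 1 := by
    apply norm_eq_one_of_inner_self
    simp only [inner_add_left, inner_add_right, real_inner_smul_left,
      real_inner_smul_right, hxx, hyy, o_xy, o_yx]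
    linear_combination (2 : ℝ) * hσ
  have hu_f : ⟪σ • x + σ • y, f⟫_ℝ = 0 := by
    simp only [inner_add_left, real_inner_smul_left, o_xf, o_yf]; ring
  have hv_f : ⟪σ • x + (-σ) • y, f⟫_ℝ = 0 := by
    simp only [inner_add_left, real_inner_smul_left, o_xf, o_yf]; ring
  have hJuf : Jacobi R (σ • x + σ • y) f = ((1/2) * a + t) • f := by
    rw [J_combo, hσ, hJxf, hJy0, ← hCfdef, hCf]
    module
  have hJvf : Jacobi R (σ • x + (-σ) • y) f = ((1/2) * a - t) • f := by
    rw [J_combo, hJxf, hJy0, ← hCfdef, hCf,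
      show (σ*σ : ℝ) = 1/2 from hσ,
      show ((-σ)*(-σ) : ℝ) = 1/2 by linear_combination hσ,
      show (2*(σ*(-σ)) : ℝ) = -1 by linear_combination (-2:ℝ)*hσ]
    module
  have hcases : (t - a/2) * (t + a/2) = 0 := by nlinarith [ht2]
  rcases mul_eq_zero.mp hcases with h' | h'
  · have hteq : t = a/2 := by linarith
    have : Jacobi R (σ • x + σ • y) f = a • f := by
      rw [hJuf, hteq]
      congr 1
      ring
    exact SL2aux hR hT hf ha hσne hu_unit hu_f hJf o_xy hyy this
  · have hteq : t = -(a/2) := by linarith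
    have hσne' : (-σ) ≠ 0 := neg_ne_zero.mpr hσne
    have : Jacobi R (σ • x + (-σ) • y) f = a • f := by
      rw [hJvf, hteq]
      congr 1
      ring
    exact SL2aux hR hT hf ha hσne' hv_unit hv_f hJf o_xy hyy this

end CfSec
section PairSec

variable {R : V →ₗ[ℝ] V →ₗ[ℝ] V →ₗ[ℝ] V}
variable (hR : IsCurvatureOperator R) (hT : JacobiTsankov R)

include hR hT

set_option maxHeartbeats 2000000 in
lemma pairLemma
    (hST : ∀ z : V, ‖z‖ = 1 →
      ∃ (μ : ℝ) (k : V), ‖k‖ = 1 ∧ ∀ w, Jacobi R z w = (μ * ⟪k, w⟫_ℝ) • k)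
    {x y f g : V} {a b : ℝ}
    (hx : ‖x‖ = 1) (hy : ‖y‖ = 1) (hf : ‖f‖ = 1) (hg : ‖g‖ = 1)
    (ha : a ≠ 0) (hb : b ≠ 0)
    (o_xy : ⟪x, y⟫_ℝ = 0) (o_yf : ⟪y, f⟫_ℝ = 0)
    (hJx : ∀ w, Jacobi R x w = (a * ⟪f, w⟫_ℝ) • f)
    (hJy : ∀ w, Jacobi R y w = (b * ⟪g, w⟫_ℝ) • g) :
    b = a ∧ ∃ s : ℝ, s * s = a*a/4 ∧
      ∀ w, JacobiP R x y w = (s * ⟪g, w⟫_ℝ) • f + (s * ⟪f, w⟫_ℝ) • g := by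
  have hff : ⟪f, f⟫_ℝ = 1 := by rw [real_inner_self_eq_norm_sq, hf]; norm_num
  have hxx : ⟪x, x⟫_ℝ = 1 := by rw [real_inner_self_eq_norm_sq, hx]; norm_num
  have hyy : ⟪y, y⟫_ℝ = 1 := by rw [real_inner_self_eq_norm_sq, hy]; norm_num
  have hgg : ⟪g, g⟫_ℝ = 1 := by rw [real_inner_self_eq_norm_sq, hg]; norm_num
  have o_fx : ⟪f, x⟫_ℝ = 0 := orth_of_struct hR hJx ha (unit_ne_zero hf)
  have o_xf : ⟪x, f⟫_ℝ = 0 := by rw [real_inner_comm]; exact o_fx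
  have o_gy : ⟪g, y⟫_ℝ = 0 := orth_of_struct hR hJy hb (unit_ne_zero hg)
  have o_yg : ⟪y, g⟫_ℝ = 0 := by rw [real_inner_comm]; exact o_gy
  have o_fy : ⟪f, y⟫_ℝ = 0 := by rw [real_inner_comm]; exact o_yf
  have o_yx : ⟪y, x⟫_ℝ = 0 := by rw [real_inner_comm]; exact o_xy
  have hJxf : Jacobi R x f = a • f := by rw [hJx f, hff, mul_one]
  have hJyg : Jacobi R y g = b • g := by rw [hJy g, hgg, mul_one]
  have hJxy0 : Jacobi R x y = 0 := by rw [hJx y, o_fy, mul_zero, zero_smul]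
  have hJyx0 : Jacobi R y x = 0 := by
    have := lemA hR hT hx hy o_xy (a := 0) (by rw [hJxy0, zero_smul])
    rw [zero_smul] at this; exact this
  have o_gx : ⟪g, x⟫_ℝ = 0 := by
    have h0 := hJy x
    rw [hJyx0] at h0
    have h1 := scalar_zero_of_smul (unit_ne_zero hg) h0.symm
    rcases mul_eq_zero.mp h1 with h' | h'
    · exact absurd h' hb
    · exact h'
  have o_xg : ⟪x, g⟫_ℝ = 0 := by rw [real_inner_comm]; exact o_gx
  have hJyf0 : Jacobi R y f = 0 := by
    have h0 := lemE hR hT hx hy o_xy hJxy0 f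
    rw [hJxf, map_smul] at h0
    rcases smul_eq_zero.mp h0 with h' | h'
    · exact absurd h' ha
    · exact h'
  have o_gf : ⟪g, f⟫_ℝ = 0 := by
    have h0 := hJy f
    rw [hJyf0] at h0
    have h1 := scalar_zero_of_smul (unit_ne_zero hg) h0.symm
    rcases mul_eq_zero.mp h1 with h' | h'
    · exact absurd h' hb
    · exact h'
  have o_fg : ⟪f, g⟫_ℝ = 0 := by rw [real_inner_comm]; exact o_gf
  have hJxg0 : Jacobi R x g = 0 := by rw [hJx g, o_fg, mul_zero, zero_smul]
  have hJf : ∀ w, Jacobi R f w = (a * ⟪x, w⟫_ℝ) • x :=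
    structJf hR hT hx hf ha hJx (hST f hf)
  have hJg : ∀ w, Jacobi R g w = (b * ⟪y, w⟫_ℝ) • y :=
    structJf hR hT hy hg hb hJy (hST g hg)
  have hCxf := circleC hR hT hx hf ha hJx hJf hST
  have hCyg := circleC hR hT hy hg hb hJy hJg hST
  obtain ⟨Af, Bf⟩ := CfEqs hR hT hx hy hf ha o_xy o_yf hJx hJf hJyf0 hCxf
  obtain ⟨Ag0, Bg0⟩ := CfEqs hR hT hy hx hg hb o_yx o_xg hJy hJg hJxg0 hCyg
  have hPcomm : JacobiP R y x = JacobiP R x y := JP_comm R y x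
  rw [hPcomm] at Ag0 Bg0
  set t₁ := ⟪f, JacobiP R x y f⟫_ℝ with ht₁
  set s₁ := ⟪g, JacobiP R x y f⟫_ℝ with hs₁
  set t₂ := ⟪g, JacobiP R x y g⟫_ℝ with ht₂
  have hs₂ : ⟪f, JacobiP R x y g⟫_ℝ = s₁ := by
    rw [← JP_symm hR x y f g, real_inner_comm]
  have hACf : a • JacobiP R x y f = (a * t₁) • f + (b * s₁) • g := by
    rw [← Af, hJx _, hJy _, ← ht₁, ← hs₁]
  have hCfg : ⟪JacobiP R x y f, g⟫_ℝ = s₁ := by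
    rw [hs₁]; exact real_inner_comm _ _
  have hdich : s₁ * (a - b) = 0 := by
    have h0 := congrArg (fun tt => ⟪tt, g⟫_ℝ) hACf
    simp only [real_inner_smul_left, inner_add_left, o_fg, hgg, hCfg] at h0
    linear_combination h0
  set σ : ℝ := (Real.sqrt 2)⁻¹ with hσdef
  have hσ : σ * σ = 1/2 := by
    have h2' : Real.sqrt 2 * Real.sqrt 2 = 2 := Real.mul_self_sqrt (by norm_num)
    rw [hσdef, ← mul_inv, h2']; norm_num
  have hσne : σ ≠ 0 := by
    rw [hσdef]; simp [Real.sqrt_eq_zero']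
  have hu_unit : ‖σ • x + σ • y‖ = 1 := by
    apply norm_eq_one_of_inner_self
    simp only [inner_add_left, inner_add_right, real_inner_smul_left,
      real_inner_smul_right, hxx, hyy, o_xy, o_yx]
    linear_combination (2 : ℝ) * hσ
  have hv_unit : ‖σ • x + (-σ) • y‖ = 1 := by
    apply norm_eq_one_of_inner_self
    simp only [inner_add_left, inner_add_right, real_inner_smul_left,
      real_inner_smul_right, hxx, hyy, o_xy, o_yx]
    linear_combination (2 : ℝ) * hσ
  have hu_f : ⟪σ • x + σ • y, f⟫_ℝ = 0 := by
    simp only [inner_add_left, real_inner_smul_left, o_xf, o_yf]; ring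
  have hv_f : ⟪σ • x + (-σ) • y, f⟫_ℝ = 0 := by
    simp only [inner_add_left, real_inner_smul_left, o_xf, o_yf]; ring
  -- eliminate the case s₁ = 0
  have hba : b = a := by
    rcases mul_eq_zero.mp hdich with hs0 | hab
    · exfalso
      have hCf1 : JacobiP R x y f = t₁ • f := by
        apply smul_cancel ha
        rw [hACf, hs0, mul_zero, zero_smul, add_zero, smul_smul]
      have ht₁2 : t₁ * t₁ = a*a/4 := by
        rw [hCf1, map_smul, hCf1, smul_smul] at Bf
        exact scalar_of_smul_unit (unit_ne_zero hf) Bf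
      have hJuf : Jacobi R (σ • x + σ • y) f = ((1/2)*a + t₁) • f := by
        rw [J_combo, hσ, hJxf, hJyf0, hCf1]
        module
      have hJvf : Jacobi R (σ • x + (-σ) • y) f = ((1/2)*a - t₁) • f := by
        rw [J_combo, hJxf, hJyf0, hCf1,
          show (σ*σ : ℝ) = 1/2 from hσ,
          show ((-σ)*(-σ) : ℝ) = 1/2 by linear_combination hσ,
          show (2*(σ*(-σ)) : ℝ) = -1 by linear_combination (-2:ℝ)*hσ]
        module
      have hcases : (t₁ - a/2) * (t₁ + a/2) = 0 := by nlinarith [ht₁2]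
      rcases mul_eq_zero.mp hcases with h' | h'
      · have hteq : t₁ = a/2 := by linarith
        have hf' : Jacobi R (σ • x + σ • y) f = a • f := by
          rw [hJuf, hteq]; congr 1; ring
        exact SL2aux hR hT hf ha hσne hu_unit hu_f hJf o_xy hyy hf'
      · have hteq : t₁ = -(a/2) := by linarith
        have hf' : Jacobi R (σ • x + (-σ) • y) f = a • f := by
          rw [hJvf, hteq]; congr 1; ring
        exact SL2aux hR hT hf ha (neg_ne_zero.mpr hσne) hv_unit hv_f hJf o_xy hyy hf'
    · linarith
  rw [hba] at hJy hJyg Ag0 hACf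
  -- now b = a everywhere
  have hCfe : JacobiP R x y f = t₁ • f + s₁ • g := by
    apply smul_cancel ha
    rw [hACf]
    module
  have hAg : a • JacobiP R x y g = (a * s₁) • f + (a * t₂) • g := by
    rw [← Ag0, hJx _, hJy _, hs₂, ← ht₂]
    module
  have hCge : JacobiP R x y g = s₁ • f + t₂ • g := by
    apply smul_cancel ha
    rw [hAg]
    module
  have hJuf' : Jacobi R (σ • x + σ • y) f = ((1/2)*a + t₁) • f + s₁ • g := by
    rw [J_combo, hσ, hJxf, hJyf0, hCfe]
    module
  have hJug' : Jacobi R (σ • x + σ • y) g = s₁ • f + ((1/2)*a + t₂) • g := by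
    rw [J_combo, hσ, hJxg0, hJyg, hCge]
    module
  have hJvf' : Jacobi R (σ • x + (-σ) • y) f = ((1/2)*a - t₁) • f - s₁ • g := by
    rw [J_combo, hJxf, hJyf0, hCfe,
      show (σ*σ : ℝ) = 1/2 from hσ,
      show ((-σ)*(-σ) : ℝ) = 1/2 by linear_combination hσ,
      show (2*(σ*(-σ)) : ℝ) = -1 by linear_combination (-2:ℝ)*hσ]
    module
  have hJvg' : Jacobi R (σ • x + (-σ) • y) g
      = (-s₁) • f + ((1/2)*a - t₂) • g := by
    rw [J_combo, hJxg0, hJyg, hCge,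
      show (σ*σ : ℝ) = 1/2 from hσ,
      show ((-σ)*(-σ) : ℝ) = 1/2 by linear_combination hσ,
      show (2*(σ*(-σ)) : ℝ) = -1 by linear_combination (-2:ℝ)*hσ]
    module
  have d11 : ⟪Jacobi R (σ • x + σ • y) f, g⟫_ℝ = s₁ := by
    rw [hJuf']
    simp only [inner_add_left, real_inner_smul_left, o_fg, hgg]; ring
  have d12 : ⟪Jacobi R (σ • x + σ • y) g, f⟫_ℝ = s₁ := by
    rw [hJug']
    simp only [inner_add_left, real_inner_smul_left, o_gf, hff]; ring
  have d13 : ⟪Jacobi R (σ • x + σ • y) f, f⟫_ℝ = (1/2)*a + t₁ := by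
    rw [hJuf']
    simp only [inner_add_left, real_inner_smul_left, o_gf, hff]; ring
  have d14 : ⟪Jacobi R (σ • x + σ • y) g, g⟫_ℝ = (1/2)*a + t₂ := by
    rw [hJug']
    simp only [inner_add_left, real_inner_smul_left, o_fg, hgg]; ring
  have D1 : s₁ * s₁ = ((1/2)*a + t₁) * ((1/2)*a + t₂) := by
    have hD := detId' (hST _ hu_unit) f g
    rw [d11, d12, d13, d14] at hD
    exact hD
  have d21 : ⟪Jacobi R (σ • x + (-σ) • y) f, g⟫_ℝ = -s₁ := by
    rw [hJvf']
    simp only [inner_sub_left, real_inner_smul_left, o_fg, hgg]; ring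
  have d22 : ⟪Jacobi R (σ • x + (-σ) • y) g, f⟫_ℝ = -s₁ := by
    rw [hJvg']
    simp only [inner_add_left, real_inner_smul_left, o_gf, hff]; ring
  have d23 : ⟪Jacobi R (σ • x + (-σ) • y) f, f⟫_ℝ = (1/2)*a - t₁ := by
    rw [hJvf']
    simp only [inner_sub_left, real_inner_smul_left, o_gf, hff]; ring
  have d24 : ⟪Jacobi R (σ • x + (-σ) • y) g, g⟫_ℝ = (1/2)*a - t₂ := by
    rw [hJvg']
    simp only [inner_add_left, real_inner_smul_left, o_fg, hgg]; ring
  have D2 : (-s₁) * (-s₁) = ((1/2)*a - t₁) * ((1/2)*a - t₂) := by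
    have hD := detId' (hST _ hv_unit) f g
    rw [d21, d22, d23, d24] at hD
    exact hD
  have ht₂eq : t₂ = -t₁ := by
    have h9 : a * (t₁ + t₂) = 0 := by linear_combination D2 - D1
    rcases mul_eq_zero.mp h9 with h' | h'
    · exact absurd h' ha
    · linarith
  have hN : t₁*t₁ + s₁*s₁ = a*a/4 := by
    have hBf' := Bf
    rw [hCfe, map_add, map_smul, map_smul, hCfe, hCge] at hBf'
    have h0 := congrArg (fun tt => ⟪tt, f⟫_ℝ) hBf'
    simp only [inner_add_left, inner_add_right, real_inner_smul_left,
      real_inner_smul_right, hff, o_fg, o_gf] at h0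
    linear_combination h0
  -- third point
  set τ : ℝ := (Real.sqrt 5)⁻¹ with hτdef
  have hτ : τ * τ = 1/5 := by
    have h5' : Real.sqrt 5 * Real.sqrt 5 = 5 := Real.mul_self_sqrt (by norm_num)
    rw [hτdef, ← mul_inv, h5']; norm_num
  have hz_unit : ‖(2*τ) • x + τ • y‖ = 1 := by
    apply norm_eq_one_of_inner_self
    simp only [inner_add_left, inner_add_right, real_inner_smul_left,
      real_inner_smul_right, hxx, hyy, o_xy, o_yx]
    linear_combination (5 : ℝ) * hτ
  have hJzf : Jacobi R ((2*τ) • x + τ • y) f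
      = ((4/5)*a + (4/5)*t₁) • f + ((4/5)*s₁) • g := by
    rw [J_combo, hJxf, hJyf0, hCfe,
      show ((2*τ)*(2*τ) : ℝ) = 4/5 by linear_combination (4:ℝ)*hτ,
      show (2*((2*τ)*τ) : ℝ) = 4/5 by linear_combination (4:ℝ)*hτ,
      show (τ*τ : ℝ) = 1/5 from hτ]
    module
  have hJzg : Jacobi R ((2*τ) • x + τ • y) g
      = ((4/5)*s₁) • f + ((1/5)*a + (4/5)*t₂) • g := by
    rw [J_combo, hJxg0, hJyg, hCge,
      show ((2*τ)*(2*τ) : ℝ) = 4/5 by linear_combination (4:ℝ)*hτ,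
      show (2*((2*τ)*τ) : ℝ) = 4/5 by linear_combination (4:ℝ)*hτ,
      show (τ*τ : ℝ) = 1/5 from hτ]
    module
  have d31 : ⟪Jacobi R ((2*τ) • x + τ • y) f, g⟫_ℝ = (4/5)*s₁ := by
    rw [hJzf]
    simp only [inner_add_left, real_inner_smul_left, o_fg, hgg]; ring
  have d32 : ⟪Jacobi R ((2*τ) • x + τ • y) g, f⟫_ℝ = (4/5)*s₁ := by
    rw [hJzg]
    simp only [inner_add_left, real_inner_smul_left, o_gf, hff]; ring
  have d33 : ⟪Jacobi R ((2*τ) • x + τ • y) f, f⟫_ℝ = (4/5)*a + (4/5)*t₁ := by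
    rw [hJzf]
    simp only [inner_add_left, real_inner_smul_left, o_gf, hff]; ring
  have d34 : ⟪Jacobi R ((2*τ) • x + τ • y) g, g⟫_ℝ = (1/5)*a + (4/5)*t₂ := by
    rw [hJzg]
    simp only [inner_add_left, real_inner_smul_left, o_fg, hgg]; ring
  have D3 : ((4/5)*s₁) * ((4/5)*s₁)
      = ((4/5)*a + (4/5)*t₁) * ((1/5)*a + (4/5)*t₂) := by
    have hD := detId' (hST _ hz_unit) f g
    rw [d31, d32, d33, d34] at hD
    exact hD
  have ht₁0 : t₁ = 0 := by
    have h9 : (3:ℝ) * (a * t₁) = 0 := by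
      linear_combination (25/4 : ℝ) * D3 + (-4 : ℝ) * hN + (4*(a+t₁)) * ht₂eq
    have h10 : a * t₁ = 0 := by linarith
    rcases mul_eq_zero.mp h10 with h' | h'
    · exact absurd h' ha
    · exact h'
  have hs₁2 : s₁ * s₁ = a*a/4 := by
    linear_combination hN - t₁ * ht₁0
  have hCfe0 : JacobiP R x y f = s₁ • g := by
    rw [hCfe, ht₁0]; module
  have hCge0 : JacobiP R x y g = s₁ • f := by
    rw [hCge, ht₂eq, ht₁0]; module
  have hCx0 : JacobiP R x y x = 0 := by rw [JP_left hR, hJxy0, smul_zero]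
  have hCy0 : JacobiP R x y y = 0 := by rw [JP_right hR, hJyx0, smul_zero]
  refine ⟨hba, s₁, hs₁2, ?_⟩
  intro w
  set w' := w - ⟪x, w⟫_ℝ • x - ⟪y, w⟫_ℝ • y - ⟪f, w⟫_ℝ • f - ⟪g, w⟫_ℝ • g with hw'
  have o_fw' : ⟪f, w'⟫_ℝ = 0 := by
    rw [hw']
    simp only [inner_sub_right, real_inner_smul_right, o_fx, o_fy, hff, o_fg]
    ring
  have o_gw' : ⟪g, w'⟫_ℝ = 0 := by
    rw [hw']
    simp only [inner_sub_right, real_inner_smul_right, o_gx, o_gy, o_gf, hgg]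
    ring
  have hJuw' : Jacobi R (σ • x + σ • y) w' = JacobiP R x y w' := by
    rw [J_combo, hσ, hJx w', hJy w', o_fw', o_gw']
    simp only [mul_zero, zero_smul, smul_zero]
    module
  obtain ⟨μ, k, hk, hJu⟩ := hST _ hu_unit
  have hkval : (μ * ⟪k, f⟫_ℝ) • k = ((1/2)*a) • f + s₁ • g := by
    rw [← hJu f, hJuf', ht₁0]
    module
  have hcne : μ * ⟪k, f⟫_ℝ ≠ 0 := by
    intro h0
    rw [h0, zero_smul] at hkval
    have h1 := congrArg (fun tt => ⟪tt, f⟫_ℝ) hkval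
    simp only [inner_zero_left, inner_add_left, real_inner_smul_left, hff,
      o_gf] at h1
    apply ha
    linarith
  have hkw' : ⟪k, w'⟫_ℝ = 0 := by
    have h1 := congrArg (fun tt => ⟪tt, w'⟫_ℝ) hkval
    simp only [real_inner_smul_left, inner_add_left, o_fw', o_gw'] at h1
    have h2 : (μ * ⟪k, f⟫_ℝ) * ⟪k, w'⟫_ℝ = 0 := by linarith
    rcases mul_eq_zero.mp h2 with h' | h'
    · exact absurd h' hcne
    · exact h'
  have hCw' : JacobiP R x y w' = 0 := by
    rw [← hJuw', hJu w', hkw', mul_zero, zero_smul]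
  have hw'' : w = w' + ⟪x, w⟫_ℝ • x + ⟪y, w⟫_ℝ • y + ⟪f, w⟫_ℝ • f
      + ⟪g, w⟫_ℝ • g := by
    rw [hw']; module
  conv_lhs => rw [hw'']
  rw [map_add, map_add, map_add, map_add, map_smul, map_smul, map_smul, map_smul,
    hCw', hCx0, hCy0, hCfe0, hCge0]
  module

end PairSec
set_option maxHeartbeats 2000000 in
theorem stmt17 [FiniteDimensional ℝ V] (hm : 3 ≤ Module.finrank ℝ V)
    (R : V →ₗ[ℝ] V →ₗ[ℝ] V →ₗ[ℝ] V) (hR : IsCurvatureOperator R)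
    (hT : JacobiTsankov R) (hne : R ≠ 0)
    (hsmall : ∀ z : V, Module.finrank ℝ (LinearMap.range (Jacobi R z)) <
      Module.finrank ℝ V - 1) :
    (∀ x : V, ‖x‖ = 1 → Module.finrank ℝ (LinearMap.range (Jacobi R x)) = 1) ∧
      ∃ lam : ℝ, ∀ x : V, ‖x‖ = 1 →
        Module.End.HasEigenvalue (Jacobi R x) lam ∧
        ∀ μ : ℝ, μ ≠ 0 → Module.End.HasEigenvalue (Jacobi R x) μ → μ = lam := by
  have hpos : 0 < Module.finrank ℝ V := by omega
  have hrank := rank_le_one_J hR hT hm hsmall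
  have hST : ∀ z : V, ‖z‖ = 1 → ∃ (μ : ℝ) (k : V), ‖k‖ = 1 ∧
      ∀ w, Jacobi R z w = (μ * ⟪k, w⟫_ℝ) • k := fun z hz =>
    rank1_structure (Jacobi R z) (fun u v => J_symm hR z u v) (hrank z hz) hpos
  obtain ⟨x₀, hx₀u, hx₀ne⟩ := exists_unit_J_ne hR hne
  obtain ⟨a, f, hfu, hJx₀⟩ := hST x₀ hx₀u
  have ha : a ≠ 0 := by
    intro h0
    apply hx₀ne
    apply LinearMap.ext
    intro w
    rw [hJx₀ w, h0, zero_mul, zero_smul, LinearMap.zero_apply]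
  have main : ∀ y : V, ‖y‖ = 1 → ∃ k, ‖k‖ = 1 ∧
      ∀ w, Jacobi R y w = (a * ⟪k, w⟫_ℝ) • k := by
    intro y hyu
    have hx₀x₀ : ⟪x₀, x₀⟫_ℝ = 1 := by rw [real_inner_self_eq_norm_sq, hx₀u]; norm_num
    have hffi : ⟪f, f⟫_ℝ = 1 := by rw [real_inner_self_eq_norm_sq, hfu]; norm_num
    have hyyi : ⟪y, y⟫_ℝ = 1 := by rw [real_inner_self_eq_norm_sq, hyu]; norm_num
    have o_fx₀ : ⟪f, x₀⟫_ℝ = 0 := orth_of_struct hR hJx₀ ha (unit_ne_zero hfu)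
    have o_x₀f : ⟪x₀, f⟫_ℝ = 0 := by rw [real_inner_comm]; exact o_fx₀
    have hJf : ∀ w, Jacobi R f w = (a * ⟪x₀, w⟫_ℝ) • x₀ :=
      structJf hR hT hx₀u hfu ha hJx₀ (hST f hfu)
    have hCxf := circleC hR hT hx₀u hfu ha hJx₀ hJf hST
    have hspan := span_case hR hT hx₀u hfu ha hJx₀ hJf hCxf
    set c₁ := ⟪x₀, y⟫_ℝ with hc₁
    set c₂ := ⟪f, y⟫_ℝ with hc₂
    set η := y - c₁ • x₀ - c₂ • f with hη
    have hyx₀ : ⟪y, x₀⟫_ℝ = c₁ := by rw [hc₁, real_inner_comm]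
    have hyf : ⟪y, f⟫_ℝ = c₂ := by rw [hc₂, real_inner_comm]
    have o_x₀η : ⟪x₀, η⟫_ℝ = 0 := by
      rw [hη]
      simp only [inner_sub_right, real_inner_smul_right, hx₀x₀, o_x₀f, ← hc₁]
      ring
    have o_fη : ⟪f, η⟫_ℝ = 0 := by
      rw [hη]
      simp only [inner_sub_right, real_inner_smul_right, hffi, o_fx₀, ← hc₂]
      ring
    have hsum : ⟪η, η⟫_ℝ = 1 - c₁*c₁ - c₂*c₂ := by
      rw [hη]
      simp only [inner_sub_left, inner_sub_right, real_inner_smul_left,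
        real_inner_smul_right, hx₀x₀, hffi, o_x₀f, o_fx₀, hyyi, hyx₀, hyf,
        ← hc₁, ← hc₂]
      ring
    by_cases hηz : η = 0
    · -- y lies in the span of x₀, f
      have hy_eq : y = c₁ • x₀ + c₂ • f := by
        have h0 : y - c₁ • x₀ - c₂ • f = 0 := by rw [← hη, hηz]
        linear_combination (norm := module) h0
      have hc12 : c₂*c₂ + c₁*c₁ = 1 := by
        rw [hηz, inner_zero_left] at hsum
        linarith
      refine ⟨c₂ • x₀ - c₁ • f, ?_, ?_⟩
      · apply norm_eq_one_of_inner_self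
        simp only [inner_sub_left, inner_sub_right, real_inner_smul_left,
          real_inner_smul_right, hx₀x₀, hffi, o_x₀f, o_fx₀]
        linear_combination hc12
      · intro w
        have h0 := hspan c₁ c₂ w
        rw [← hy_eq] at h0
        exact h0
    · -- mixed / orthogonal case
      set γ := ‖η‖ with hγ
      have hγne : γ ≠ 0 := by rw [hγ]; exact norm_ne_zero_iff.mpr hηz
      have hγ2 : γ*γ = ⟪η, η⟫_ℝ := by
        rw [real_inner_self_eq_norm_sq, hγ]; ring
      set zh := γ⁻¹ • η with hzh
      have hzu : ‖zh‖ = 1 := by rw [hzh, hγ]; exact norm_smul_inv_norm hηz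
      have o_x₀z : ⟪x₀, zh⟫_ℝ = 0 := by
        rw [hzh, real_inner_smul_right, o_x₀η, mul_zero]
      have o_fz : ⟪f, zh⟫_ℝ = 0 := by
        rw [hzh, real_inner_smul_right, o_fη, mul_zero]
      have o_zf : ⟪zh, f⟫_ℝ = 0 := by rw [real_inner_comm]; exact o_fz
      obtain ⟨b, g₂, hg₂u, hJzh⟩ := hST zh hzu
      have hbne : b ≠ 0 := by
        intro h0
        refine hop2forcing hR hT hST hx₀u hzu hfu ha o_x₀z o_zf hJx₀ ?_
        intro w
        rw [hJzh w, h0, zero_mul, zero_smul]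
      obtain ⟨hba, -⟩ := pairLemma hR hT hST hx₀u hzu hfu hg₂u ha hbne o_x₀z o_zf
        hJx₀ hJzh
      rw [hba] at hJzh
      by_cases hc0 : c₁ = 0 ∧ c₂ = 0
      · have hyη : y = η := by
          rw [hη, hc0.1, hc0.2]; module
        have hγ1 : γ = 1 := by rw [hγ, ← hyη, hyu]
        have hzy : zh = y := by rw [hzh, hγ1, ← hyη, inv_one, one_smul]
        exact ⟨g₂, hg₂u, by rw [← hzy]; exact hJzh⟩
      · -- genuinely mixed
        have hc12pos : 0 < c₁*c₁ + c₂*c₂ := by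
          rcases not_and_or.mp hc0 with h' | h'
          · exact add_pos_of_pos_of_nonneg (mul_self_pos.mpr h') (mul_self_nonneg c₂)
          · exact add_pos_of_nonneg_of_pos (mul_self_nonneg c₁) (mul_self_pos.mpr h')
        set α : ℝ := Real.sqrt (c₁*c₁ + c₂*c₂) with hα
        have hα2 : α*α = c₁*c₁ + c₂*c₂ := Real.mul_self_sqrt (le_of_lt hc12pos)
        have hαne : α ≠ 0 := by
          rw [hα]
          exact ne_of_gt (Real.sqrt_pos.mpr hc12pos)
        set p := (c₁/α) • x₀ + (c₂/α) • f with hp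
        set wv := (c₂/α) • x₀ - (c₁/α) • f with hwv
        have hJp : ∀ w, Jacobi R p w = (a * ⟪wv, w⟫_ℝ) • wv := by
          intro w
          rw [hp, hwv]
          exact hspan _ _ w
        have hJwv : ∀ w, Jacobi R wv w = (a * ⟪p, w⟫_ℝ) • p := by
          intro w
          have harg : wv = (c₂/α) • x₀ + (-(c₁/α)) • f := by rw [hwv]; module
          have h0 := hspan (c₂/α) (-(c₁/α)) w
          rw [← harg] at h0
          rw [h0]
          have hneg : (-(c₁/α)) • x₀ - (c₂/α) • f = -p := by rw [hp]; module
          rw [hneg, inner_neg_left]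
          module
        have hJx₀z : Jacobi R x₀ zh = 0 := by
          rw [hJx₀ zh, o_fz, mul_zero, zero_smul]
        have hJzx₀ : Jacobi R zh x₀ = 0 := by
          have := lemA hR hT hx₀u hzu o_x₀z (a := 0) (by rw [hJx₀z, zero_smul])
          rw [zero_smul] at this; exact this
        have o_g₂x₀ : ⟪g₂, x₀⟫_ℝ = 0 := by
          have h0 := hJzh x₀
          rw [hJzx₀] at h0
          have h1 := scalar_zero_of_smul (unit_ne_zero hg₂u) h0.symm
          rcases mul_eq_zero.mp h1 with h' | h'
          · exact absurd h' ha
          · exact h'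
        have hJfz : Jacobi R f zh = 0 := by
          rw [hJf zh, o_x₀z, mul_zero, zero_smul]
        have hJzf : Jacobi R zh f = 0 := by
          have := lemA hR hT hfu hzu o_fz (a := 0) (by rw [hJfz, zero_smul])
          rw [zero_smul] at this; exact this
        have o_g₂f : ⟪g₂, f⟫_ℝ = 0 := by
          have h0 := hJzh f
          rw [hJzf] at h0
          have h1 := scalar_zero_of_smul (unit_ne_zero hg₂u) h0.symm
          rcases mul_eq_zero.mp h1 with h' | h'
          · exact absurd h' ha
          · exact h'
        have o_g₂z : ⟪g₂, zh⟫_ℝ = 0 := orth_of_struct hR hJzh ha (unit_ne_zero hg₂u)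
        have hJg₂ : ∀ w, Jacobi R g₂ w = (a * ⟪zh, w⟫_ℝ) • zh :=
          structJf hR hT hzu hg₂u ha hJzh (hST g₂ hg₂u)
        have hpi : ⟪p, p⟫_ℝ = 1 := by
          rw [hp]
          simp only [inner_add_left, inner_add_right, real_inner_smul_left,
            real_inner_smul_right, hx₀x₀, hffi, o_x₀f, o_fx₀]
          field_simp
          linear_combination (-1:ℝ) * hα2
        have hpu : ‖p‖ = 1 := norm_eq_one_of_inner_self hpi
        have hwvi : ⟪wv, wv⟫_ℝ = 1 := by
          rw [hwv]
          simp only [inner_sub_left, inner_sub_right, real_inner_smul_left,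
            real_inner_smul_right, hx₀x₀, hffi, o_x₀f, o_fx₀]
          field_simp
          linear_combination (-1:ℝ) * hα2
        have hwvu : ‖wv‖ = 1 := norm_eq_one_of_inner_self hwvi
        have o_wvg₂ : ⟪wv, g₂⟫_ℝ = 0 := by
          rw [hwv]
          have h1 : ⟪x₀, g₂⟫_ℝ = 0 := by rw [real_inner_comm]; exact o_g₂x₀
          have h2 : ⟪f, g₂⟫_ℝ = 0 := by rw [real_inner_comm]; exact o_g₂f
          simp only [inner_sub_left, real_inner_smul_left, h1, h2]
          ring
        have o_g₂p : ⟪g₂, p⟫_ℝ = 0 := by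
          rw [hp]
          simp only [inner_add_right, real_inner_smul_right, o_g₂x₀, o_g₂f]
          ring
        obtain ⟨-, s, hs2, hCw⟩ := pairLemma hR hT hST hwvu hg₂u hpu hzu ha ha
          o_wvg₂ o_g₂p hJwv hJg₂
        set δ : ℝ := (2*s/a) * γ with hδ
        clear_value c₁ c₂ η γ zh α p wv δ
        have key : ∀ w, Jacobi R (α • wv + δ • g₂) w
            = (a * ⟪α • p + γ • zh, w⟫_ℝ) • (α • p + γ • zh) := by
          intro w
          have hin : ⟪α • p + γ • zh, w⟫_ℝ = α * ⟪p, w⟫_ℝ + γ * ⟪zh, w⟫_ℝ := by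
            rw [inner_add_left, real_inner_smul_left, real_inner_smul_left]
          rw [J_combo, hJwv w, hJg₂ w, hCw w, hin, hδ]
          match_scalars
          · field_simp
            linear_combination (4 * γ * ⟪zh, w⟫_ℝ) * hs2
          · field_simp
            linear_combination (4 * (γ * ⟪zh, w⟫_ℝ + α * ⟪p, w⟫_ℝ)) * hs2
        have hαp : α • p = c₁ • x₀ + c₂ • f := by
          rw [hp, smul_add, smul_smul, smul_smul, mul_comm α (c₁/α),
            div_mul_cancel₀ c₁ hαne, mul_comm α (c₂/α), div_mul_cancel₀ c₂ hαne]
        have hγz : γ • zh = η := by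
          rw [hzh, smul_smul, mul_inv_cancel₀ hγne, one_smul]
        have hy_eq2 : y = α • p + γ • zh := by
          rw [hαp, hγz, hη]
          module
        have hδ2 : δ*δ = γ*γ := by
          rw [hδ]
          field_simp
          linear_combination 4 * hs2
        have hu'i : ⟪α • wv + δ • g₂, α • wv + δ • g₂⟫_ℝ = 1 := by
          have o_g₂wv : ⟪g₂, wv⟫_ℝ = 0 := by rw [real_inner_comm]; exact o_wvg₂
          have hg₂g₂ : ⟪g₂, g₂⟫_ℝ = 1 := by
            rw [real_inner_self_eq_norm_sq, hg₂u]; norm_num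
          simp only [inner_add_left, inner_add_right, real_inner_smul_left,
            real_inner_smul_right, hwvi, hg₂g₂, o_wvg₂, o_g₂wv]
          have hγγ : γ*γ = 1 - c₁*c₁ - c₂*c₂ := by rw [hγ2, hsum]
          linear_combination hα2 + hδ2 + hγγ
        have hu'u : ‖α • wv + δ • g₂‖ = 1 := norm_eq_one_of_inner_self hu'i
        have hy' : Jacobi R (α • wv + δ • g₂) y = a • y := by
          have h0 := key y
          rw [← hy_eq2, hyyi, mul_one] at h0
          exact h0
        have o_u'y : ⟪α • wv + δ • g₂, y⟫_ℝ = 0 := by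
          have h1 : ⟪wv, y⟫_ℝ = 0 := by
            rw [hy_eq2, hwv]
            have e1 : ⟪x₀, p⟫_ℝ = c₁/α := by
              rw [hp]
              simp only [inner_add_right, real_inner_smul_right, hx₀x₀, o_x₀f]
              ring
            have e2 : ⟪f, p⟫_ℝ = c₂/α := by
              rw [hp]
              simp only [inner_add_right, real_inner_smul_right, hffi, o_fx₀]
              ring
            simp only [inner_sub_left, inner_add_right, real_inner_smul_left,
              real_inner_smul_right, e1, e2, o_x₀z, o_fz]
            ring
          have h2 : ⟪g₂, y⟫_ℝ = 0 := by
            rw [hy_eq2]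
            simp only [inner_add_right, real_inner_smul_right, o_g₂p, o_g₂z]
            ring
          simp only [inner_add_left, real_inner_smul_left, h1, h2]
          ring
        have hfin := lemA hR hT hu'u hyu o_u'y hy'
        exact ⟨_, hu'u, rank1_eigen' (hST y hyu) hu'u ha hfin⟩
  constructor
  · intro x hx
    obtain ⟨k, hk, hJ⟩ := main x hx
    have hkne : k ≠ 0 := unit_ne_zero hk
    have hkk : ⟪k, k⟫_ℝ = 1 := by rw [real_inner_self_eq_norm_sq, hk]; norm_num
    have hrangeEq : LinearMap.range (Jacobi R x) = ℝ ∙ k := by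
      apply le_antisymm
      · rintro _ ⟨v, rfl⟩
        rw [hJ v]
        exact Submodule.smul_mem _ _ (Submodule.mem_span_singleton_self _)
      · rw [Submodule.span_le, Set.singleton_subset_iff]
        refine ⟨a⁻¹ • k, ?_⟩
        rw [hJ _, real_inner_smul_right, hkk, mul_one, mul_inv_cancel₀ ha, one_smul]
    rw [hrangeEq, finrank_span_singleton hkne]
  · refine ⟨a, fun x hx => ?_⟩
    obtain ⟨k, hk, hJ⟩ := main x hx
    have hkk : ⟪k, k⟫_ℝ = 1 := by rw [real_inner_self_eq_norm_sq, hk]; norm_num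
    have hev : Jacobi R x k = a • k := by rw [hJ k, hkk, mul_one]
    constructor
    · exact Module.End.hasEigenvalue_of_hasEigenvector
        ⟨Module.End.mem_eigenspace_iff.mpr hev, unit_ne_zero hk⟩
    · intro μ hμ hμe
      obtain ⟨v, hv⟩ := hμe.exists_hasEigenvector
      have hveq : Jacobi R x v = μ • v := hv.apply_eq_smul
      rw [hJ v] at hveq
      by_cases hkv : ⟪k, v⟫_ℝ = 0
      · rw [hkv, mul_zero, zero_smul] at hveq
        exact absurd ((smul_eq_zero.mp hveq.symm).resolve_left hμ) hv.2
      · have h1 := congrArg (fun t => ⟪k, t⟫_ℝ) hveq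
        simp only [real_inner_smul_right, hkk] at h1
        have h2 : a * ⟪k, v⟫_ℝ = μ * ⟪k, v⟫_ℝ := by linear_combination h1
        exact (mul_right_cancel₀ hkv h2).symm
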